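/- arXiv:1102.4550 — 6 statements merged into one kernel-verified Lean document; each statement's English description precedes it below -/
import Mathlib

section
/- Let Z = {P_1, ..., P_m} be a set of m distinct points in ℙⁿ (n ≥ 2) satisfying the Cayley–Bacharach condition with respect to degree-r hypersurfaces, where r ≥ 1. If m ≤ 2r + 1, then all points of Z lie on a single line. -/
open MvPolynomial

/-- Cayley–Bacharach condition with respect to degree-`r` hypersurfaces, for a family of
(projective) points of `ℙⁿ` given by nonzero vectors in `ℂ^{n+1}`. -/
def CayleyBacharach (n r m : ℕ) (P : Fin m → (Fin (n + 1) → ℂ)) : Prop :=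
  ∀ i : Fin m, ∀ F : MvPolynomial (Fin (n + 1)) ℂ, F.IsHomogeneous r →
    (∀ j : Fin m, j ≠ i → eval (P j) F = 0) → eval (P i) F = 0

section Helpers

open Submodule

variable {V : Type*} [AddCommGroup V] [Module ℂ V]

/-- (B): if the pencils through w and u, w and v differ, and u,v are not multiples of w,
w ≠ 0, then w is not in span {u,v}. -/
lemma helperB {u v w : V} (hw0 : w ≠ 0)
    (hu : ∀ c : ℂ, u ≠ c • w) (hv : ∀ c : ℂ, v ≠ c • w)
    (hne : span ℂ {w, u} ≠ span ℂ {w, v}) : w ∉ span ℂ ({u, v} : Set V) := by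
  intro hmem
  rw [mem_span_pair] at hmem
  obtain ⟨a, b, hab⟩ := hmem
  by_cases hb : b = 0
  · subst hb
    by_cases ha : a = 0
    · simp [ha] at hab; exact hw0 hab.symm
    · exact hu a⁻¹ (by rw [← hab]; simp [smul_smul, inv_mul_cancel₀ ha])
  · by_cases ha : a = 0
    · exact hv b⁻¹ (by rw [← hab]; simp [ha, smul_smul, inv_mul_cancel₀ hb])
    · apply hne
      have hv' : v ∈ span ℂ ({w, u} : Set V) := by
        rw [mem_span_pair]
        exact ⟨b⁻¹, -(b⁻¹ * a), by
          rw [← hab]; simp [smul_add, smul_smul, inv_mul_cancel₀ hb]⟩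
      have hu' : u ∈ span ℂ ({w, v} : Set V) := by
        rw [mem_span_pair]
        exact ⟨a⁻¹, -(a⁻¹ * b), by
          rw [← hab]; simp [smul_add, smul_smul, inv_mul_cancel₀ ha]⟩
      apply le_antisymm
      · rw [span_le]; rintro x (rfl | rfl)
        · exact subset_span (by simp)
        · exact hu'
      · rw [span_le]; rintro x (rfl | rfl)
        · exact subset_span (by simp)
        · exact hv'

/-- (D): points in W ∩ span{q,t} with q ∉ W are pairwise proportional. -/
lemma helperD {W : Submodule ℂ V} {q t x y : V} (hq : q ∉ W)
    (hx : x ∈ W) (hy : y ∈ W) (hy0 : y ≠ 0)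
    (hx' : x ∈ span ℂ ({q, t} : Set V)) (hy' : y ∈ span ℂ ({q, t} : Set V)) :
    ∃ c : ℂ, x = c • y := by
  rw [mem_span_pair] at hx' hy'
  obtain ⟨a, b, hab⟩ := hx'
  obtain ⟨a', b', hab'⟩ := hy'
  have key : b' • x - b • y = (b' * a - b * a') • q := by
    rw [← hab, ← hab']; module
  have hz : b' * a - b * a' = 0 := by
    by_contra hne
    apply hq
    have : q = (b' * a - b * a')⁻¹ • (b' • x - b • y) := by
      rw [key, smul_smul, inv_mul_cancel₀ hne, one_smul]
    rw [this]
    exact Submodule.smul_mem _ _ (Submodule.sub_mem _ (Submodule.smul_mem _ _ hx) (Submodule.smul_mem _ _ hy))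
  rw [hz, zero_smul, sub_eq_zero] at key
  by_cases hb' : b' = 0
  · have hb : b = 0 := by
      rcases smul_eq_zero.mp (key.symm.trans (by rw [hb', zero_smul])) with h | h
      · exact h
      · exact absurd h hy0
    have ha' : a' ≠ 0 := by
      intro h; apply hy0; rw [← hab', h, hb', zero_smul, zero_smul, add_zero]
    refine ⟨a * a'⁻¹, ?_⟩
    rw [← hab, ← hab', hb, hb']; simp [smul_smul]
    rw [mul_assoc, inv_mul_cancel₀ ha', mul_one]
  · exact ⟨b'⁻¹ * b, by rw [mul_smul, ← key, smul_smul, inv_mul_cancel₀ hb', one_smul]⟩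


lemma combLemma {α β : Type*} [DecidableEq α] [DecidableEq β] :
    ∀ (r : ℕ) (S : Finset α) (f : α → β),
    S.card ≤ 2 * r → (∀ a ∈ S, (S.filter (fun x => f x = f a)).card ≤ r) →
    ∃ c : α → ℕ, (∀ a ∈ S, c a < r) ∧
      (∀ k : ℕ, (S.filter (fun x => c x = k)).card ≤ 2) ∧
      (∀ a ∈ S, ∀ b ∈ S, a ≠ b → c a = c b → f a ≠ f b) := by
  intro r
  induction r with
  | zero =>
    intro S f hS hfib
    have : S = ∅ := Finset.card_eq_zero.mp (Nat.le_zero.mp hS)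
    subst this
    exact ⟨fun _ => 0, by simp, by simp, by simp⟩
  | succ r IH =>
    intro S f hS hfib
    rcases S.eq_empty_or_nonempty with rfl | hSne
    · exact ⟨fun _ => 0, by simp, by simp, by simp⟩
    obtain ⟨a, haS, hamax⟩ := S.exists_max_image
      (fun x => (S.filter (fun y => f y = f x)).card) hSne
    set S' := S.erase a with hS'def
    have hS'card : S'.card = S.card - 1 := Finset.card_erase_of_mem haS
    set T := S'.filter (fun x => f x ≠ f a) with hTdef
    rcases T.eq_empty_or_nonempty with hTe | hTne
    · -- all of S is in a's class
      have hall : ∀ b ∈ S, f b = f a := by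
        intro b hb
        by_contra hne
        rcases eq_or_ne b a with rfl | hba
        · exact hne rfl
        · have : b ∈ T := by
            rw [hTdef]; exact Finset.mem_filter.mpr ⟨Finset.mem_erase.mpr ⟨hba, hb⟩, hne⟩
          rw [hTe] at this; exact absurd this (Finset.notMem_empty b)
      have hScard : S.card ≤ r + 1 := by
        have := hfib a haS
        rwa [Finset.filter_true_of_mem hall] at this
      have hS'le : S'.card ≤ 2 * r := by omega
      have hfib' : ∀ b ∈ S', (S'.filter (fun x => f x = f b)).card ≤ r := by
        intro b hb
        calc (S'.filter (fun x => f x = f b)).card ≤ S'.card := Finset.card_filter_le _ _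
          _ ≤ r := by omega
      obtain ⟨c', hc1, hc2, hc3⟩ := IH S' f hS'le hfib'
      refine ⟨fun x => if x = a then r else c' x, ?_, ?_, ?_⟩
      · intro b hb
        by_cases hba : b = a
        · simp [hba]
        · simp only [hba, if_false]
          exact lt_trans (hc1 b (Finset.mem_erase.mpr ⟨hba, hb⟩)) (Nat.lt_succ_self r)
      · intro k
        by_cases hk : k = r
        · have hsub : S.filter (fun x => (if x = a then r else c' x) = k) ⊆ {a} := by
            intro x hx
            rw [Finset.mem_filter] at hx
            rcases eq_or_ne x a with rfl | hxa
            · simp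
            · exfalso
              have := hc1 x (Finset.mem_erase.mpr ⟨hxa, hx.1⟩)
              rw [if_neg hxa] at hx
              omega
          calc _ ≤ ({a} : Finset α).card := Finset.card_le_card hsub
            _ ≤ 2 := by simp
        · have heq : S.filter (fun x => (if x = a then r else c' x) = k)
              = S'.filter (fun x => c' x = k) := by
            ext x
            simp only [Finset.mem_filter, hS'def, Finset.mem_erase]
            constructor
            · rintro ⟨hxS, hxc⟩
              rcases eq_or_ne x a with rfl | hxa
              · rw [if_pos rfl] at hxc; exact absurd hxc.symm hk
              · rw [if_neg hxa] at hxc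
                exact ⟨⟨hxa, hxS⟩, hxc⟩
            · rintro ⟨⟨hxa, hxS⟩, hxc⟩
              exact ⟨hxS, by rw [if_neg hxa]; exact hxc⟩
          rw [heq]; exact hc2 k
      · intro x hx y hy hxy hcxy
        dsimp only at hcxy
        rcases eq_or_ne x a with rfl | hxa
        · exfalso
          rw [if_pos rfl, if_neg (Ne.symm hxy)] at hcxy
          have := hc1 y (Finset.mem_erase.mpr ⟨Ne.symm hxy, hy⟩); omega
        · rcases eq_or_ne y a with rfl | hya
          · exfalso
            rw [if_pos rfl, if_neg hxa] at hcxy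
            have := hc1 x (Finset.mem_erase.mpr ⟨hxa, hx⟩); omega
          · rw [if_neg hxa, if_neg hya] at hcxy
            exact hc3 x (Finset.mem_erase.mpr ⟨hxa, hx⟩) y (Finset.mem_erase.mpr ⟨hya, hy⟩) hxy hcxy
    · -- pick a' in T maximizing its fiber in S'
      obtain ⟨a', ha'T, ha'max⟩ := T.exists_max_image
        (fun x => (S'.filter (fun y => f y = f x)).card) hTne
      have ha'S' : a' ∈ S' := (Finset.mem_filter.mp ha'T).1
      have ha'f : f a' ≠ f a := (Finset.mem_filter.mp ha'T).2
      have ha'S : a' ∈ S := Finset.mem_of_mem_erase ha'S'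
      have ha'a : a' ≠ a := (Finset.mem_erase.mp ha'S').1
      set S'' := S'.erase a' with hS''def
      have hS''card : S''.card = S.card - 2 := by
        rw [hS''def, Finset.card_erase_of_mem ha'S', hS'card]; omega
      have hScard2 : 2 ≤ S.card := Finset.one_lt_card.mpr ⟨a, haS, a', ha'S, Ne.symm ha'a⟩
      have hS''le : S''.card ≤ 2 * r := by omega
      have hmemS'' : ∀ x, x ∈ S'' ↔ (x ∈ S ∧ x ≠ a ∧ x ≠ a') := by
        intro x
        rw [hS''def, Finset.mem_erase, hS'def, Finset.mem_erase]
        tauto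
      have hfib'' : ∀ b ∈ S'', (S''.filter (fun x => f x = f b)).card ≤ r := by
        intro b hb
        by_contra hgt
        push_neg at hgt
        have hbS : b ∈ S := ((hmemS'' b).mp hb).1
        have hsubS : S''.filter (fun x => f x = f b) ⊆ S.filter (fun x => f x = f b) := by
          intro x hx
          rw [Finset.mem_filter] at hx ⊢
          exact ⟨((hmemS'' x).mp hx.1).1, hx.2⟩
        have hcardS : (S.filter (fun x => f x = f b)).card ≤ r + 1 := hfib b hbS
        have heqfib : S''.filter (fun x => f x = f b) = S.filter (fun x => f x = f b) :=
          Finset.eq_of_subset_of_card_le hsubS (by omega)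
        -- a and a' are not in b's class
        have hfa : f a ≠ f b := by
          intro h
          have : a ∈ S''.filter (fun x => f x = f b) := by
            rw [heqfib, Finset.mem_filter]; exact ⟨haS, h⟩
          exact ((hmemS'' a).mp (Finset.mem_filter.mp this).1).2.1 rfl
        have hfa' : f a' ≠ f b := by
          intro h
          have : a' ∈ S''.filter (fun x => f x = f b) := by
            rw [heqfib, Finset.mem_filter]; exact ⟨ha'S, h⟩
          exact ((hmemS'' a').mp (Finset.mem_filter.mp this).1).2.2 rfl
        -- b ∈ T
        have hbT : b ∈ T := by
          rw [hTdef, Finset.mem_filter, hS'def, Finset.mem_erase]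
          exact ⟨⟨((hmemS'' b).mp hb).2.1, hbS⟩, fun h => hfa h.symm⟩
        -- b's fiber in S' is big
        have hb' : r + 1 ≤ (S'.filter (fun x => f x = f b)).card := by
          have : S''.filter (fun x => f x = f b) ⊆ S'.filter (fun x => f x = f b) := by
            intro x hx
            rw [Finset.mem_filter] at hx ⊢
            exact ⟨Finset.mem_of_mem_erase hx.1, hx.2⟩
          have := Finset.card_le_card this
          omega
        have ha'big : r + 1 ≤ (S'.filter (fun x => f x = f a')).card :=
          le_trans hb' (ha'max b hbT)
        -- the two fibers in S' are disjoint
        have hdisj : Disjoint (S'.filter (fun x => f x = f a'))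
            (S'.filter (fun x => f x = f b)) := by
          rw [Finset.disjoint_left]
          intro x hx1 hx2
          rw [Finset.mem_filter] at hx1 hx2
          exact hfa' (hx1.2.symm.trans hx2.2)
        have hunion := Finset.card_union_of_disjoint hdisj
        have hsub2 : (S'.filter (fun x => f x = f a')) ∪ (S'.filter (fun x => f x = f b)) ⊆ S' :=
          Finset.union_subset (Finset.filter_subset _ _) (Finset.filter_subset _ _)
        have := Finset.card_le_card hsub2
        omega
      obtain ⟨c'', hc1, hc2, hc3⟩ := IH S'' f hS''le hfib''
      refine ⟨fun x => if x = a ∨ x = a' then r else c'' x, ?_, ?_, ?_⟩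
      · intro b hb
        dsimp only
        by_cases hb2 : b = a ∨ b = a'
        · rw [if_pos hb2]; omega
        · rw [if_neg hb2]
          push_neg at hb2
          have := hc1 b ((hmemS'' b).mpr ⟨hb, hb2⟩)
          omega
      · intro k
        by_cases hk : k = r
        · have hsub : S.filter (fun x => (if x = a ∨ x = a' then r else c'' x) = k)
              ⊆ {a, a'} := by
            intro x hx
            rw [Finset.mem_filter] at hx
            by_cases hx2 : x = a ∨ x = a'
            · simpa using hx2
            · exfalso
              push_neg at hx2
              rw [if_neg (by push_neg; exact hx2)] at hx
              have := hc1 x ((hmemS'' x).mpr ⟨hx.1, hx2⟩)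
              omega
          calc _ ≤ ({a, a'} : Finset α).card := Finset.card_le_card hsub
            _ ≤ 2 := Finset.card_insert_le _ _ |>.trans (by simp)
        · have heq : S.filter (fun x => (if x = a ∨ x = a' then r else c'' x) = k)
              = S''.filter (fun x => c'' x = k) := by
            ext x
            rw [Finset.mem_filter, Finset.mem_filter, hmemS'' x]
            constructor
            · rintro ⟨hxS, hxc⟩
              by_cases hx2 : x = a ∨ x = a'
              · rw [if_pos hx2] at hxc; exact absurd hxc.symm hk
              · push_neg at hx2
                rw [if_neg (by push_neg; exact hx2)] at hxc
                exact ⟨⟨hxS, hx2⟩, hxc⟩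
            · rintro ⟨⟨hxS, hx2⟩, hxc⟩
              refine ⟨hxS, ?_⟩
              rw [if_neg (by push_neg; exact hx2)]
              exact hxc
          rw [heq]; exact hc2 k
      · intro x hx y hy hxy hcxy
        dsimp only at hcxy
        by_cases hx2 : x = a ∨ x = a'
        · by_cases hy2 : y = a ∨ y = a'
          · -- both in {a, a'}, distinct, so {x,y} = {a,a'}
            rcases hx2 with rfl | rfl <;> rcases hy2 with rfl | rfl
            · exact absurd rfl hxy
            · exact fun h => ha'f h.symm
            · exact ha'f
            · exact absurd rfl hxy
          · exfalso
            rw [if_pos hx2, if_neg hy2] at hcxy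
            push_neg at hy2
            have := hc1 y ((hmemS'' y).mpr ⟨hy, hy2⟩)
            omega
        · by_cases hy2 : y = a ∨ y = a'
          · exfalso
            rw [if_neg hx2, if_pos hy2] at hcxy
            push_neg at hx2
            have := hc1 x ((hmemS'' x).mpr ⟨hx, hx2⟩)
            omega
          · rw [if_neg hx2, if_neg hy2] at hcxy
            push_neg at hx2; push_neg at hy2
            exact hc3 x ((hmemS'' x).mpr ⟨hx, hx2⟩) y ((hmemS'' y).mpr ⟨hy, hy2⟩) hxy hcxy

section helpers
variable {V : Type*} [AddCommGroup V] [Module ℂ V]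

lemma stmt1aux_rank2 (u v : V) : Module.finrank ℂ (span ℂ ({u, v} : Set V)) ≤ 2 := by
  classical
  have h1 := finrank_span_finset_le_card (R := ℂ) ({u, v} : Finset V)
  have h2 : (↑({u, v} : Finset V) : Set V) = ({u, v} : Set V) := by simp
  rw [h2] at h1
  refine le_trans h1 ?_
  refine le_trans (Finset.card_insert_le _ _) ?_
  simp

end helpers

end Helpers

open Submodule

/-- a set of `m` distinct points of `ℙⁿ` (`n ≥ 2`) satisfying the
Cayley–Bacharach condition with respect to `|O(r)|`, `r ≥ 1`, with `m ≤ 2r + 1`, lies on a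
line (a pencil: a 2-dimensional linear subspace of `ℂ^{n+1}`). -/
theorem stmt1 (n r m : ℕ) (hn : 2 ≤ n) (hr : 1 ≤ r) (hm : m ≤ 2 * r + 1)
    (P : Fin m → (Fin (n + 1) → ℂ))
    (hP0 : ∀ i, P i ≠ 0)
    (hdist : ∀ i j : Fin m, i ≠ j → ∀ c : ℂ, P i ≠ c • P j)
    (hCB : CayleyBacharach n r m P) :
    ∃ W : Submodule ℂ (Fin (n + 1) → ℂ), Module.finrank ℂ W ≤ 2 ∧ ∀ i, P i ∈ W := by
  classical
  by_contra hline
  push_neg at hline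
  -- m ≥ 1
  have hm1 : 0 < m := by
    rcases Nat.eq_zero_or_pos m with rfl | h
    · obtain ⟨i, _⟩ := hline ⊥ (by simp)
      exact i.elim0
    · exact h
  -- find an index i all of whose "pencil classes" are small
  have hgood : ∃ i : Fin m, ∀ j ∈ Finset.univ.erase i,
      ((Finset.univ.erase i).filter
        (fun k => span ℂ ({P i, P k} : Set _) = span ℂ ({P i, P j} : Set _))).card ≤ r := by
    by_contra hbad
    push_neg at hbad
    set i₀ : Fin m := ⟨0, hm1⟩ with hi₀
    obtain ⟨j₀, hj₀mem, hj₀⟩ := hbad i₀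
    set W : Submodule ℂ (Fin (n+1) → ℂ) := span ℂ ({P i₀, P j₀} : Set _) with hW
    set D := Finset.univ.filter (fun k => P k ∈ W) with hD
    have hDcard : r + 2 ≤ D.card := by
      have hsub : (Finset.univ.erase i₀).filter
          (fun k => span ℂ ({P i₀, P k} : Set _) = span ℂ ({P i₀, P j₀} : Set _))
          ⊆ D.erase i₀ := by
        intro k hk
        simp only [Finset.mem_filter, Finset.mem_erase] at hk
        simp only [Finset.mem_erase, hD, Finset.mem_filter]
        refine ⟨hk.1.1, Finset.mem_univ k, ?_⟩
        rw [hW, ← hk.2]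
        exact subset_span (by simp)
      have h1 : r + 1 ≤ (D.erase i₀).card :=
        le_trans (by exact hj₀) (Finset.card_le_card hsub)
      have h2 : i₀ ∈ D := by
        simp only [hD, Finset.mem_filter]
        exact ⟨Finset.mem_univ _, subset_span (by simp)⟩
      have h3 := Finset.card_erase_of_mem h2
      have h4 : 0 < D.card := Finset.card_pos.mpr ⟨i₀, h2⟩
      omega
    obtain ⟨q, hq⟩ := hline W (stmt1aux_rank2 _ _)
    obtain ⟨j₁, hj₁mem, hj₁⟩ := hbad q
    set B := (Finset.univ.erase q).filter
      (fun k => span ℂ ({P q, P k} : Set _) = span ℂ ({P q, P j₁} : Set _)) with hB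
    have hBW' : ∀ k ∈ B, P k ∈ span ℂ ({P q, P j₁} : Set _) := by
      intro k hk
      simp only [hB, Finset.mem_filter] at hk
      rw [← hk.2]
      exact subset_span (by simp)
    have hBD : (B ∩ D).card ≤ 1 := by
      rw [Finset.card_le_one]
      intro k hk k' hk'
      simp only [Finset.mem_inter, hD, Finset.mem_filter] at hk hk'
      by_contra hkk
      obtain ⟨cc, hcc⟩ := helperD hq hk.2.2 hk'.2.2 (hP0 k')
        (hBW' k hk.1) (hBW' k' hk'.1)
      exact hdist k k' hkk cc hcc
    have hqD : q ∉ D := by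
      simp only [hD, Finset.mem_filter]
      rintro ⟨-, h⟩; exact hq h
    have hqB : q ∉ B := by
      simp only [hB, Finset.mem_filter, Finset.mem_erase]
      rintro ⟨⟨h, -⟩, -⟩; exact h rfl
    have hsplit := Finset.card_sdiff_add_card_inter B D
    have hdisj : Disjoint D (B \ D) := Finset.disjoint_sdiff
    have hcardU := Finset.card_union_of_disjoint hdisj
    have hqU : q ∉ D ∪ (B \ D) := by
      rw [Finset.mem_union]
      rintro (h | h)
      · exact hqD h
      · exact hqB (Finset.mem_sdiff.mp h).1
    have hins := Finset.card_insert_of_notMem hqU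
    have hle : (insert q (D ∪ (B \ D))).card ≤ m := by
      have := Finset.card_le_univ (insert q (D ∪ (B \ D)))
      simpa using this
    omega
  obtain ⟨i, hgoodi⟩ := hgood
  set S := Finset.univ.erase i with hSdef
  have hScard : S.card = m - 1 := by
    rw [hSdef, Finset.card_erase_of_mem (Finset.mem_univ i)]
    simp
  obtain ⟨c, hc1, hc2, hc3⟩ := combLemma r S (fun j => span ℂ ({P i, P j} : Set _))
    (by omega) hgoodi
  -- P i is not in the span of any color class
  have key : ∀ k : ℕ, k < r → P i ∉ span ℂ (P '' ((S.filter (fun x => c x = k)) : Set (Fin m))) := by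
    intro k hk
    set Cl := S.filter (fun x => c x = k) with hCl
    have hCl2 := hc2 k
    rw [← hCl] at hCl2
    have hmemS : ∀ a ∈ Cl, a ≠ i := by
      intro a ha
      rw [hCl, Finset.mem_filter, hSdef, Finset.mem_erase] at ha
      exact ha.1.1
    have hcc : Cl.card = 0 ∨ Cl.card = 1 ∨ Cl.card = 2 := by omega
    rcases hcc with hcard | hcard | hcard
    · have : Cl = ∅ := Finset.card_eq_zero.mp hcard
      rw [this]
      simp only [Finset.coe_empty, Set.image_empty, span_empty, mem_bot]
      exact hP0 i
    · obtain ⟨a, ha⟩ := Finset.card_eq_one.mp hcard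
      rw [ha]
      simp only [Finset.coe_singleton, Set.image_singleton]
      rw [mem_span_singleton]
      rintro ⟨cc, hcc⟩
      exact hdist i a (Ne.symm (hmemS a (by rw [ha]; simp))) cc hcc.symm
    · obtain ⟨a, b, hab, hCleq⟩ := Finset.card_eq_two.mp hcard
      have haCl : a ∈ Cl := by rw [hCleq]; simp
      have hbCl : b ∈ Cl := by rw [hCleq]; simp
      have haS : a ∈ S := (Finset.mem_filter.mp haCl).1
      have hbS : b ∈ S := (Finset.mem_filter.mp hbCl).1
      have hfab : span ℂ ({P i, P a} : Set _) ≠ span ℂ ({P i, P b} : Set _) := by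
        have hca : c a = k := (Finset.mem_filter.mp haCl).2
        have hcb : c b = k := (Finset.mem_filter.mp hbCl).2
        exact hc3 a haS b hbS hab (hca.trans hcb.symm)
      rw [hCleq]
      have himg : (P '' (↑({a, b} : Finset (Fin m)) : Set (Fin m))) = {P a, P b} := by
        simp [Set.image_insert_eq]
      rw [himg]
      exact helperB (hP0 i) (hdist a i (hmemS a haCl)) (hdist b i (hmemS b hbCl)) hfab
  -- choose dual functionals
  have hdual : ∀ k : Fin r, ∃ g : Module.Dual ℂ (Fin (n+1) → ℂ),
      g (P i) ≠ 0 ∧ ∀ j ∈ S.filter (fun x => c x = (k : ℕ)), g (P j) = 0 := by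
    intro k
    obtain ⟨g, hg1, hg2⟩ := Submodule.exists_dual_map_eq_bot_of_notMem (key k k.2) inferInstance
    refine ⟨g, hg1, fun j hj => ?_⟩
    have hmem : P j ∈ span ℂ (P '' ((S.filter (fun x => c x = (k : ℕ))) : Set (Fin m))) :=
      subset_span ⟨j, hj, rfl⟩
    have hmem2 : g (P j) ∈ Submodule.map g
        (span ℂ (P '' ((S.filter (fun x => c x = (k : ℕ))) : Set (Fin m)))) :=
      Submodule.mem_map_of_mem hmem
    rw [hg2] at hmem2
    simpa using hmem2
  choose g hg1 hg2 using hdual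
  set F : MvPolynomial (Fin (n+1)) ℂ :=
    ∏ k : Fin r, ∑ x : Fin (n+1), (MvPolynomial.C (g k (fun j' => if x = j' then 1 else 0)) * X x)
    with hF
  have hFhom : F.IsHomogeneous r := by
    have h := MvPolynomial.IsHomogeneous.prod Finset.univ
      (fun k : Fin r => ∑ x : Fin (n+1), (MvPolynomial.C (g k (fun j' => if x = j' then 1 else 0)) * X x))
      (fun _ => 1)
      (fun k _ => MvPolynomial.IsHomogeneous.sum _ _ 1
        (fun x _ => MvPolynomial.isHomogeneous_C_mul_X _ _))
    simpa using h
  have hFeval : ∀ v : Fin (n+1) → ℂ, eval v F = ∏ k : Fin r, g k v := by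
    intro v
    rw [hF, map_prod]
    refine Finset.prod_congr rfl (fun k _ => ?_)
    rw [map_sum, LinearMap.pi_apply_eq_sum_univ (g k) v]
    refine Finset.sum_congr rfl (fun x _ => ?_)
    simp [mul_comm]
  have hvan : ∀ j, j ≠ i → eval (P j) F = 0 := by
    intro j hj
    have hjS : j ∈ S := by rw [hSdef, Finset.mem_erase]; exact ⟨hj, Finset.mem_univ j⟩
    have hcj : c j < r := hc1 j hjS
    rw [hFeval]
    apply Finset.prod_eq_zero (Finset.mem_univ (⟨c j, hcj⟩ : Fin r))
    exact hg2 _ j (Finset.mem_filter.mpr ⟨hjS, rfl⟩)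
  have hzero := hCB i F hFhom hvan
  rw [hFeval] at hzero
  exact (Finset.prod_ne_zero_iff.mpr (fun k _ => hg1 k)) hzero
end

section
/- Let Z be a finite set of distinct points in ℙⁿ (n ≥ 2) satisfying the Cayley–Bacharach condition with respect to degree-r hypersurfaces (r ≥ 2). Suppose Z = Z' ⊔ Z'' where Z' is contained in a line ℓ and Z'' is disjoint from ℓ and nonempty. Then Z'' satisfies the Cayley–Bacharach condition with respect to degree-(r−1) hypersurfaces. -/
open MvPolynomial

/-- Cayley–Bacharach condition with respect to degree-`r` hypersurfaces for a family of
points of `ℙⁿ` (nonzero vectors of `ℂ^{n+1}`), restricted to the indices in `S`. -/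
def CayleyBacharachOn (n r m : ℕ) (P : Fin m → (Fin (n + 1) → ℂ)) (S : Set (Fin m)) : Prop :=
  ∀ i ∈ S, ∀ F : MvPolynomial (Fin (n + 1)) ℂ, F.IsHomogeneous r →
    (∀ j ∈ S, j ≠ i → eval (P j) F = 0) → eval (P i) F = 0

/-- if `Z = Z' ⊔ Z''` is a set of distinct points of `ℙⁿ` (`n ≥ 2`) satisfying
the Cayley–Bacharach condition for degree `r ≥ 2`, with `Z'` contained in a line `ℓ`
(a rank-2 subspace `W`), `Z''` disjoint from `ℓ` and nonempty, then `Z''` satisfies the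
Cayley–Bacharach condition for degree `r - 1`. -/
theorem stmt3 (n r m : ℕ) (hn : 2 ≤ n) (hr : 2 ≤ r)
    (P : Fin m → (Fin (n + 1) → ℂ))
    (hP0 : ∀ i, P i ≠ 0)
    (hdist : ∀ i j : Fin m, i ≠ j → ∀ c : ℂ, P i ≠ c • P j)
    (hCB : CayleyBacharachOn n r m P Set.univ)
    (S : Set (Fin m)) (hSne : S.Nonempty)
    (W : Submodule ℂ (Fin (n + 1) → ℂ)) (hW : Module.finrank ℂ W = 2)
    (hZ' : ∀ i, i ∉ S → P i ∈ W)
    (hZ'' : ∀ i ∈ S, P i ∉ W) :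
    CayleyBacharachOn n (r - 1) m P S := by
  intro i hi F hF hvan
  obtain ⟨f, hfx, hfW⟩ := W.exists_dual_map_eq_bot_of_notMem (hZ'' i hi) inferInstance
  have hfW0 : ∀ y ∈ W, f y = 0 := by
    intro y hy
    have : f y ∈ W.map f := Submodule.mem_map_of_mem hy
    rwa [hfW, Submodule.mem_bot] at this
  -- the linear form as a polynomial
  set H : MvPolynomial (Fin (n + 1)) ℂ :=
    ∑ j, C (f fun k => if j = k then 1 else 0) * X j with hH
  have hHeval : ∀ x : Fin (n + 1) → ℂ, eval x H = f x := by
    intro x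
    rw [LinearMap.pi_apply_eq_sum_univ f x, hH]
    simp [mul_comm, smul_eq_mul]
  have hHhom : H.IsHomogeneous 1 := by
    apply IsHomogeneous.sum
    intro j _
    simpa using (isHomogeneous_C _ (f fun k => if j = k then 1 else 0)).mul
      (isHomogeneous_X _ j)
  have hGhom : (H * F).IsHomogeneous r := by
    have := hHhom.mul hF
    rwa [show 1 + (r - 1) = r by omega] at this
  have hG0 : eval (P i) (H * F) = 0 := by
    apply hCB i (Set.mem_univ i) _ hGhom
    intro j _ hj
    rw [eval_mul]
    by_cases hjS : j ∈ S
    · rw [hvan j hjS hj, mul_zero]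
    · rw [hHeval, hfW0 _ (hZ' j hjS), zero_mul]
  rw [eval_mul, hHeval] at hG0
  exact (mul_eq_zero.mp hG0).resolve_left hfx
end

section
/- Suppose m distinct points in ℙⁿ (n ≥ 2) satisfy the Cayley–Bacharach condition with respect to degree-r hypersurfaces, and let h be the maximum number of points of the set that lie on a common line. If r + 2 ≤ m ≤ 2r + 1 and the points are not all collinear, then m − h ≥ r + 1 and m − h ≤ h, yielding the contradiction r + 1 ≤ m/2 ≤ r + 1/2; hence the points are collinear. -/
open MvPolynomial

/-- The family of points indexed by `T` is collinear (lies in a rank-≤2 subspace). -/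
def CollinearOn (n m : ℕ) (P : Fin m → (Fin (n + 1) → ℂ)) (T : Set (Fin m)) : Prop :=
  ∃ W : Submodule ℂ (Fin (n + 1) → ℂ), Module.finrank ℂ W ≤ 2 ∧ ∀ i ∈ T, P i ∈ W

/-
Suppose the points are not collinear: let `W`, of dimension at most two (a projective line), contain
a largest collinear subset, of size `h`, and pick `P i ∉ W`. A linear form vanishing on `W`,
together with one linear form through each of the other points off `W`, all nonzero at `P i`, give a
form of degree `#{j | P j ∉ W}` vanishing on every point but `P i`; Cayley–Bacharach forces this
degree to exceed `r`, so `h + r + 1 ≤ m` and hence `h ≤ r`. Next, every line through `P i` carries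
fewer than `h` further points, hence at most `⌈(m - 1) / 2⌉` of the `m - 1` remaining ones, so these
can be paired up (greedily, always using a point of a most populated line) into `⌈(m - 1) / 2⌉ ≤ r`
pairs whose members lie on different lines through `P i`. Each pair spans a line missing `P i`, and
the product of the corresponding linear forms again contradicts Cayley–Bacharach.
-/

open Finset

section LinearForms

variable {σ K : Type*} [Fintype σ] [DecidableEq σ] [Field K]

noncomputable def Module.Dual.toMvPolynomial (φ : Module.Dual K (σ → K)) : MvPolynomial σ K :=
  ∑ i, C (φ (Pi.single i 1)) * X i

theorem Module.Dual.isHomogeneous_toMvPolynomial (φ : Module.Dual K (σ → K)) :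
    φ.toMvPolynomial.IsHomogeneous 1 :=
  IsHomogeneous.sum _ _ _ fun i _ => by
    simpa using (isHomogeneous_C _ _).mul (isHomogeneous_X K i)

@[simp]
theorem Module.Dual.eval_toMvPolynomial (φ : Module.Dual K (σ → K)) (p : σ → K) :
    MvPolynomial.eval p φ.toMvPolynomial = φ p := by
  have hsingle (i : σ) : (fun j => if i = j then (1 : K) else 0) = Pi.single i 1 := by
    ext j; simp [Pi.single_apply, eq_comm]
  simp [Module.Dual.toMvPolynomial, LinearMap.pi_apply_eq_sum_univ φ p, hsingle, mul_comm]

end LinearForms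

section Collinearity

variable {ι K V : Type*} [Field K] [AddCommGroup V] [Module K V] {P : ι → V}

open Submodule

theorem finrank_span_pair_le (a b : V) : Module.finrank K (span K {a, b}) ≤ 2 := by
  classical
  have := (finrank_span_finset_le_card (R := K) ({a, b} : Finset V)).trans card_le_two
  rwa [Finset.coe_pair] at this

theorem notMem_span_singleton_of_ne (hdist : ∀ i j : ι, i ≠ j → ∀ c : K, P i ≠ c • P j)
    {i j : ι} (hij : i ≠ j) : P i ∉ span K {P j} := fun hmem => by
  obtain ⟨c, hc⟩ := mem_span_singleton.mp hmem
  exact hdist i j hij c hc.symm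

theorem notMem_span_pair_of_span_pair_ne (hdist : ∀ i j : ι, i ≠ j → ∀ c : K, P i ≠ c • P j)
    {i a b : ι} (hia : i ≠ a) (hib : i ≠ b)
    (hab : a = b ∨ span K {P i, P a} ≠ span K {P i, P b}) : P i ∉ span K {P a, P b} := by
  rcases hab with rfl | hab
  · simpa using notMem_span_singleton_of_ne hdist hia
  have hle {x y : ι} (hiy : i ≠ y) (hmem : P i ∈ span K {P x, P y}) :
      span K {P i, P x} ≤ span K {P i, P y} := by
    have hx := mem_span_insert_exchange hmem (notMem_span_singleton_of_ne hdist hiy)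
    exact span_le.mpr (Set.insert_subset (subset_span (Set.mem_insert _ _))
      (Set.singleton_subset_iff.mpr hx))
  intro hmem
  exact hab (le_antisymm (hle hib hmem) (hle hia (Set.pair_comm (P a) (P b) ▸ hmem)))

end Collinearity

section RainbowPairing

variable {α β : Type*} [DecidableEq α] [DecidableEq β] {cl : α → β} {M : Finset α}

theorem Finset.two_mul_card_filter_erase_erase_le {x y z : α} (hxM : x ∈ M)
    (hx : 2 * #{w ∈ M | cl w = cl x} ≤ #M + 1)
    (hxmax : ∀ u ∈ M, #{w ∈ M | cl w = cl u} ≤ #{w ∈ M | cl w = cl x})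
    (hyM : y ∈ M) (hyx : cl y ≠ cl x) (hz : z ∈ (M.erase x).erase y) :
    2 * #{w ∈ (M.erase x).erase y | cl w = cl z} ≤ #M - 1 := by
  have hzM : z ∈ M := mem_of_mem_erase (mem_of_mem_erase hz)
  by_cases hzx : cl z = cl x
  · have hsub : {w ∈ (M.erase x).erase y | cl w = cl z} ⊆ {w ∈ M | cl w = cl x}.erase x := by
      intro w hw
      simp only [mem_filter, mem_erase] at hw ⊢
      exact ⟨hw.1.2.1, hw.1.2.2, hw.2.trans hzx⟩
    have hxC : x ∈ {w ∈ M | cl w = cl x} := mem_filter.mpr ⟨hxM, rfl⟩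
    have := card_le_card hsub
    rw [card_erase_of_mem hxC] at this
    omega
  · have hdisj : Disjoint {w ∈ (M.erase x).erase y | cl w = cl z} {w ∈ M | cl w = cl x} :=
      disjoint_left.mpr fun w hw hw' =>
        hzx ((mem_filter.mp hw).2.symm.trans (mem_filter.mp hw').2)
    have hsub : {w ∈ (M.erase x).erase y | cl w = cl z} ∪ {w ∈ M | cl w = cl x} ⊆ M.erase y := by
      intro w hw
      simp only [mem_union, mem_filter, mem_erase] at hw ⊢
      rcases hw with hw | hw
      · exact ⟨hw.1.1, hw.1.2.2⟩
      · exact ⟨fun h => hyx (h ▸ hw.2), hw.1⟩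
    have := card_le_card hsub
    rw [card_union_of_disjoint hdisj, card_erase_of_mem hyM] at this
    have := (card_le_card (filter_subset_filter _
      ((erase_subset y _).trans (erase_subset x M)))).trans (hxmax z hzM)
    omega

/-- A pair `(x, x)` stands for the singleton `{x}`. -/
theorem Finset.exists_rainbow_pairing (cl : α → β) (M : Finset α)
    (hM : ∀ x ∈ M, 2 * #{y ∈ M | cl y = cl x} ≤ #M + 1) :
    ∃ pairs : Finset (α × α), #pairs ≤ (#M + 1) / 2 ∧ pairs ⊆ M ×ˢ M ∧
      (∀ p ∈ pairs, p.1 = p.2 ∨ cl p.1 ≠ cl p.2) ∧ ∀ x ∈ M, ∃ p ∈ pairs, x = p.1 ∨ x = p.2 := by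
  induction hN : #M using Nat.strong_induction_on generalizing M with
  | _ N ih =>
  subst hN
  rcases M.eq_empty_or_nonempty with rfl | hne
  · exact ⟨∅, by simp⟩
  obtain ⟨x, hxM, hxmax⟩ := exists_max_image M (fun z => #{y ∈ M | cl y = cl z}) hne
  by_cases hy : ∃ y ∈ M, cl y ≠ cl x
  swap
  · push Not at hy
    have hMx : M = {x} := by
      have := hM x hxM
      rw [filter_true_of_mem hy] at this
      exact eq_singleton_iff_unique_mem.mpr
        ⟨hxM, fun z hz => card_le_one.mp (by omega) z hz x hxM⟩
    subst hMx
    exact ⟨{(x, x)}, by simp⟩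
  obtain ⟨y, hyM, hyx⟩ := hy
  set M' := (M.erase x).erase y
  have hM'M : M' ⊆ M := (erase_subset _ _).trans (erase_subset _ _)
  have hM' : #M' + 2 = #M := by
    have hxy : x ≠ y := fun h => hyx (h ▸ rfl)
    rw [card_erase_of_mem (mem_erase.mpr ⟨hxy.symm, hyM⟩), card_erase_of_mem hxM]
    have : 2 ≤ #M := one_lt_card.mpr ⟨x, hxM, y, hyM, hxy⟩
    omega
  have hfib (z : α) (hz : z ∈ M') : 2 * #{w ∈ M' | cl w = cl z} ≤ #M' + 1 :=
    (two_mul_card_filter_erase_erase_le hxM (hM x hxM) hxmax hyM hyx hz).trans (by omega)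
  obtain ⟨pairs, hcard, hsub, hrainbow, hcov⟩ := ih #M' (by omega) M' hfib rfl
  refine ⟨insert (x, y) pairs, ?_, ?_, ?_, ?_⟩
  · have := card_insert_le (x, y) pairs
    omega
  · exact insert_subset (mem_product.mpr ⟨hxM, hyM⟩)
      (hsub.trans (product_subset_product hM'M hM'M))
  · simpa [hyx.symm] using hrainbow
  · intro z hz
    by_cases hzxy : z = x ∨ z = y
    · exact ⟨(x, y), mem_insert_self _ _, hzxy⟩
    · push Not at hzxy
      obtain ⟨p, hp, hzp⟩ := hcov z (mem_erase.mpr ⟨hzxy.2, mem_erase.mpr ⟨hzxy.1, hz⟩⟩)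
      exact ⟨p, mem_insert_of_mem hp, hzp⟩

end RainbowPairing

namespace CayleyBacharach

open Submodule

variable {n r m : ℕ} {P : Fin m → (Fin (n + 1) → ℂ)}

theorem mono (hCB : CayleyBacharach n r m P) (hP : ∀ i, P i ≠ 0) {d : ℕ} (hd : d ≤ r) :
    CayleyBacharach n d m P := by
  intro i F hF hvan
  obtain ⟨k, hk⟩ : ∃ k, P i k ≠ 0 := Function.ne_iff.mp (hP i)
  have hFX : (F * X k ^ (r - d)).IsHomogeneous r := by
    simpa [Nat.add_sub_cancel' hd] using hF.mul ((isHomogeneous_X ℂ k).pow (r - d))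
  simpa [hk] using hCB i _ hFX fun j hj => by simp [hvan j hj]

theorem exists_mem_of_forall_ne_exists_mem (hCB : CayleyBacharach n r m P) (hP : ∀ i, P i ≠ 0)
    (i : Fin m) (Ws : Finset (Submodule ℂ (Fin (n + 1) → ℂ))) (hWs : #Ws ≤ r)
    (hcov : ∀ j, j ≠ i → ∃ W ∈ Ws, P j ∈ W) : ∃ W ∈ Ws, P i ∈ W := by
  by_contra! hi
  choose! φ hφi hφW using fun W (hW : W ∈ Ws) =>
    W.exists_dual_map_eq_bot_of_notMem (hi W hW) inferInstance
  have hF : (∏ W ∈ Ws, (φ W).toMvPolynomial).IsHomogeneous #Ws := by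
    simpa using IsHomogeneous.prod Ws _ (fun _ => 1) fun W _ => (φ W).isHomogeneous_toMvPolynomial
  have hvan (j : Fin m) (hj : j ≠ i) : eval (P j) (∏ W ∈ Ws, (φ W).toMvPolynomial) = 0 := by
    obtain ⟨W, hW, hjW⟩ := hcov j hj
    have hφj : φ W (P j) = 0 := (mem_bot ℂ).mp (hφW W hW ▸ mem_map_of_mem hjW)
    simpa [map_prod] using prod_eq_zero hW (by simpa using hφj)
  have hvani := hCB.mono hP hWs i _ hF hvan
  rw [map_prod] at hvani
  exact prod_ne_zero_iff.mpr (fun W hW => by simpa using hφi W hW) hvani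

open Classical in
theorem lt_card_filter_notMem (hCB : CayleyBacharach n r m P) (hP : ∀ i, P i ≠ 0)
    (hdist : ∀ i j : Fin m, i ≠ j → ∀ c : ℂ, P i ≠ c • P j) {W : Submodule ℂ (Fin (n + 1) → ℂ)}
    {i : Fin m} (hi : P i ∉ W) : r < #{j | P j ∉ W} := by
  by_contra! hle
  set S : Finset (Fin m) := {j | P j ∉ W}
  have hiS : i ∈ S := mem_filter.mpr ⟨mem_univ i, hi⟩
  let Ws := insert W ((S.erase i).image fun j => span ℂ {P j})
  have hWs : #Ws ≤ r := calc
    #Ws ≤ #((S.erase i).image fun j => span ℂ {P j}) + 1 := card_insert_le _ _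
    _ ≤ #(S.erase i) + 1 := by gcongr; exact card_image_le
    _ = #S := card_erase_add_one hiS
    _ ≤ r := hle
  have hcov (j : Fin m) (hj : j ≠ i) : ∃ V ∈ Ws, P j ∈ V := by
    by_cases hjW : P j ∈ W
    · exact ⟨W, mem_insert_self _ _, hjW⟩
    · exact ⟨span ℂ {P j}, mem_insert_of_mem (mem_image_of_mem _
        (mem_erase.mpr ⟨hj, mem_filter.mpr ⟨mem_univ j, hjW⟩⟩)), mem_span_singleton_self _⟩
  obtain ⟨V, hV, hiV⟩ := hCB.exists_mem_of_forall_ne_exists_mem hP i Ws hWs hcov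
  rcases mem_insert.mp hV with rfl | hV
  · exact hi hiV
  · obtain ⟨j, hj, rfl⟩ := mem_image.mp hV
    exact notMem_span_singleton_of_ne hdist (ne_of_mem_erase hj).symm hiV

theorem lt_div_two_of_two_mul_card_le (hCB : CayleyBacharach n r m P) (hP : ∀ i, P i ≠ 0)
    (hdist : ∀ i j : Fin m, i ≠ j → ∀ c : ℂ, P i ≠ c • P j) (i : Fin m)
    (hlines : ∀ j, 2 * #{k ∈ univ.erase i | span ℂ {P i, P k} = span ℂ {P i, P j}} ≤ m) :
    r < m / 2 := by
  by_contra! hle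
  have hm : #(univ.erase i) + 1 = m := by
    rw [card_erase_add_one (mem_univ i), card_univ, Fintype.card_fin]
  obtain ⟨pairs, hcard, hsub, hrainbow, hcov⟩ := exists_rainbow_pairing
    (fun j => span ℂ {P i, P j}) (univ.erase i) fun j _ => (hlines j).trans_eq hm.symm
  have hcov' (j : Fin m) (hj : j ≠ i) :
      ∃ V ∈ pairs.image fun p => span ℂ {P p.1, P p.2}, P j ∈ V := by
    obtain ⟨p, hp, hjp⟩ := hcov j (mem_erase.mpr ⟨hj, mem_univ j⟩)
    refine ⟨_, mem_image_of_mem _ hp, ?_⟩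
    rcases hjp with rfl | rfl
    · exact subset_span (Set.mem_insert _ _)
    · exact subset_span (Set.mem_insert_of_mem _ rfl)
  obtain ⟨V, hV, hiV⟩ := hCB.exists_mem_of_forall_ne_exists_mem hP i _
    (card_image_le.trans (hcard.trans (by omega))) hcov'
  obtain ⟨⟨a, b⟩, hp, rfl⟩ := mem_image.mp hV
  obtain ⟨ha, hb⟩ := mem_product.mp (hsub hp)
  exact notMem_span_pair_of_span_pair_ne hdist (ne_of_mem_erase ha).symm
    (ne_of_mem_erase hb).symm (hrainbow _ hp) hiV

end CayleyBacharach

open Submodule in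
theorem card_filter_span_pair_lt {n m h : ℕ} {P : Fin m → (Fin (n + 1) → ℂ)}
    (hh : IsGreatest {t : ℕ | ∃ T : Finset (Fin m), #T = t ∧ CollinearOn n m P (T : Set (Fin m))} h)
    (i j : Fin m) : #{k ∈ univ.erase i | span ℂ {P i, P k} = span ℂ {P i, P j}} < h := by
  set C : Finset (Fin m) := {k ∈ univ.erase i | span ℂ {P i, P k} = span ℂ {P i, P j}}
  have hcol : CollinearOn n m P (insert i C : Finset (Fin m)) := by
    refine ⟨span ℂ {P i, P j}, finrank_span_pair_le _ _, fun k hk => ?_⟩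
    rcases mem_insert.mp hk with rfl | hk
    · exact subset_span (Set.mem_insert _ _)
    · rw [← (mem_filter.mp hk).2]
      exact subset_span (Set.mem_insert_of_mem _ rfl)
  have := hh.2 ⟨_, rfl, hcol⟩
  rwa [card_insert_of_notMem (by simp [C])] at this

theorem stmt4_general (n r m h : ℕ) (hm2 : m ≤ 2 * r + 1)
    (P : Fin m → (Fin (n + 1) → ℂ))
    (hP0 : ∀ i, P i ≠ 0)
    (hdist : ∀ i j : Fin m, i ≠ j → ∀ c : ℂ, P i ≠ c • P j)
    (hCB : CayleyBacharach n r m P)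
    (hh : IsGreatest {t : ℕ | ∃ T : Finset (Fin m), T.card = t ∧
      CollinearOn n m P (T : Set (Fin m))} h) :
    (¬ CollinearOn n m P Set.univ → r + 1 ≤ m - h ∧ m - h ≤ h) ∧
      CollinearOn n m P Set.univ := by
  classical
  have hcol : CollinearOn n m P Set.univ := by
    by_contra hNC
    obtain ⟨T, rfl, W, hW, hTW⟩ := hh.1
    obtain ⟨i, hi⟩ : ∃ i, P i ∉ W := by
      by_contra! hall
      exact hNC ⟨W, hW, fun i _ => hall i⟩
    have hout : r < #{j | P j ∉ W} := hCB.lt_card_filter_notMem hP0 hdist hi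
    have hT : #T + #{j | P j ∉ W} ≤ m := by
      rw [← card_union_of_disjoint (disjoint_left.mpr fun j hjT hjW => by
        simp only [mem_filter] at hjW; exact hjW.2 (hTW j hjT))]
      exact (card_le_univ _).trans_eq (Fintype.card_fin m)
    have hlines := card_filter_span_pair_lt hh i
    have hhalf := hCB.lt_div_two_of_two_mul_card_le hP0 hdist i fun j => by
      have := hlines j; omega
    omega
  exact ⟨fun hNC => absurd hcol hNC, hcol⟩

/-- for `m` distinct points of `ℙⁿ` (`n ≥ 2`) satisfying Cayley–Bacharach in
degree `r ≥ 2`, with `h` the maximal number of collinear points and `r + 2 ≤ m ≤ 2r + 1`: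
if the points were not all collinear then `m - h ≥ r + 1` and `m - h ≤ h` (giving the
contradiction `r + 1 ≤ m/2 ≤ r + 1/2`); hence the points are all collinear. -/
theorem stmt4 (n r m h : ℕ) (hn : 2 ≤ n) (hr : 2 ≤ r)
    (hm1 : r + 2 ≤ m) (hm2 : m ≤ 2 * r + 1)
    (P : Fin m → (Fin (n + 1) → ℂ))
    (hP0 : ∀ i, P i ≠ 0)
    (hdist : ∀ i j : Fin m, i ≠ j → ∀ c : ℂ, P i ≠ c • P j)
    (hCB : CayleyBacharach n r m P)
    (hh : IsGreatest {t : ℕ | ∃ T : Finset (Fin m), T.card = t ∧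
      CollinearOn n m P (T : Set (Fin m))} h) :
    (¬ CollinearOn n m P Set.univ → r + 1 ≤ m - h ∧ m - h ≤ h) ∧
      CollinearOn n m P Set.univ :=
  stmt4_general n r m h hm2 P hP0 hdist hCB hh
end

section
/- Let X ⊂ ℙ³ be a smooth surface of degree d ≥ 5 containing a line ℓ. For a general plane H containing ℓ, write H ∩ X = ℓ ∪ C_H with C_H a plane curve of degree d − 1. Then the divisor D = C_H ∩ ℓ on ℓ (of degree d − 1) cannot be supported at a single point for general H; equivalently, the congruence of tangent lines of X along ℓ does not have order one. -/
/-!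
Since `F` vanishes on `ℓ`, its gradient along `ℓ` is orthogonal to `e` and `f`; hence the binary
forms `A = g₀ · ∇F` and `B = g₁ · ∇F` have no common zero on `ℓ`, for otherwise `∇F` would vanish
at a point of `X`. A base-point-free pencil `A + x B` of binary forms of degree `n ≥ 2` contains
at most two `n`-th powers: if `c_k L_k ^ n` (`k = 0, 1, 2`) were members, the `L_k` would be
pairwise independent and the third member an affine combination of the other two. In coordinates
with `L₀ = z`, `L₁ = 1` this reads `c (u z + w) ^ n = p z ^ n + q` with `c u w ≠ 0`, which fails
on the coefficient of `z ^ (n - 1)`.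
-/

namespace MvPolynomial

variable {σ R : Type*} [CommRing R]

theorem derivative_aeval [Fintype σ] (φ : σ → Polynomial R) (G : MvPolynomial σ R) :
    Polynomial.derivative (aeval φ G) =
      ∑ i, aeval φ (pderiv i G) * Polynomial.derivative (φ i) := by
  classical
  induction G using MvPolynomial.induction_on with
  | C a => simp
  | add p q hp hq => simp only [map_add, hp, hq, add_mul, Finset.sum_add_distrib]
  | mul_X p k hp =>
    simp only [map_mul, aeval_X, Polynomial.derivative_mul, hp, Derivation.leibniz, pderiv_X,
      Pi.single_apply, smul_eq_mul, mul_ite, mul_one, mul_zero, map_add, add_mul,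
      Finset.sum_add_distrib, Finset.sum_mul, apply_ite (aeval φ), map_zero, ite_mul, zero_mul,
      Finset.sum_ite_eq, Finset.mem_univ, if_true]
    rw [add_comm]
    exact congrArg _ (Finset.sum_congr rfl fun i _ => by ring)

theorem eval_aeval_C_add_C_mul_X {K : Type*} [Field K] (p u : σ → K) (H : MvPolynomial σ K)
    (x : K) :
    (aeval (fun i => Polynomial.C (p i) + Polynomial.C (u i) * Polynomial.X) H).eval x =
      eval (p + x • u) H := by
  rw [← Polynomial.coe_aeval_eq_eval, ← AlgHom.comp_apply, comp_aeval, ← coe_aeval_eq_eval]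
  have hv : (fun i => Polynomial.aeval x (Polynomial.C (p i) + Polynomial.C (u i) * Polynomial.X))
      = p + x • u := by
    funext i
    simp only [map_add, map_mul, Polynomial.aeval_C, Polynomial.aeval_X, Pi.add_apply,
      Pi.smul_apply, smul_eq_mul, Algebra.algebraMap_self, RingHom.id_apply, mul_comm]
  rw [hv]
  rfl

theorem sum_mul_eval_pderiv_eq_zero_of_eval_add_smul_eq_zero {K : Type*} [Field K] [Infinite K]
    [Fintype σ] {G : MvPolynomial σ K} {p u : σ → K} (h : ∀ x : K, eval (p + x • u) G = 0) :
    ∑ i, u i * eval p (pderiv i G) = 0 := by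
  set φ : σ → Polynomial K := fun i => Polynomial.C (p i) + Polynomial.C (u i) * Polynomial.X
  have hφ : aeval φ G = 0 := Polynomial.funext fun x => by
    simp only [φ, eval_aeval_C_add_C_mul_X, h, Polynomial.eval_zero]
  have := congrArg (fun q => (Polynomial.derivative q).eval 0) hφ
  simp only [derivative_aeval, φ, Polynomial.eval_finsetSum, Polynomial.eval_mul,
    eval_aeval_C_add_C_mul_X, Polynomial.derivative_add, Polynomial.derivative_C,
    Polynomial.derivative_C_mul_X, zero_add, Polynomial.eval_C, zero_smul, add_zero,
    Polynomial.derivative_zero, Polynomial.eval_zero] at this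
  simpa only [mul_comm] using this

end MvPolynomial

theorem eq_zero_of_forall_dotProduct_eq_zero {K n : Type*} [Field K] [Fintype n] [DecidableEq n]
    {b : n → n → K} (hb : LinearIndependent K b) {w : n → K} (h : ∀ k, b k ⬝ᵥ w = 0) : w = 0 :=
  Matrix.mulVec_injective_iff_isUnit.mpr
    (Matrix.linearIndependent_rows_iff_isUnit.mp hb) (by simpa [funext_iff, Matrix.mulVec] using h)

theorem exists_ne_zero_linear_forms_eq_zero {K : Type*} [Field K] {a b a' b' : K}
    (h : a * b' - a' * b = 0) :
    ∃ s t : K, ¬(s = 0 ∧ t = 0) ∧ a * s + b * t = 0 ∧ a' * s + b' * t = 0 := by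
  obtain ⟨v, hv, hMv⟩ := Matrix.exists_mulVec_eq_zero_iff.mpr
    (show (!![a, b; a', b'] : Matrix (Fin 2) (Fin 2) K).det = 0 by
      rw [Matrix.det_fin_two_of]; linear_combination h)
  refine ⟨v 0, v 1, fun h01 => hv (funext fun i => by fin_cases i <;> simp [h01]), ?_, ?_⟩
  · simpa [Matrix.mulVec, dotProduct, Fin.sum_univ_two] using congrFun hMv 0
  · simpa [Matrix.mulVec, dotProduct, Fin.sum_univ_two] using congrFun hMv 1

theorem exists_linear_forms_eq {K : Type*} [Field K] {a₀ b₀ a₁ b₁ : K}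
    (h : a₀ * b₁ - a₁ * b₀ ≠ 0) (a₂ b₂ z : K) :
    ∃ s t : K, a₀ * s + b₀ * t = z ∧ a₁ * s + b₁ * t = 1 ∧
      a₂ * s + b₂ * t = (a₂ * b₁ - a₁ * b₂) / (a₀ * b₁ - a₁ * b₀) * z
        + (a₀ * b₂ - a₂ * b₀) / (a₀ * b₁ - a₁ * b₀) :=
  ⟨(z * b₁ - b₀) / (a₀ * b₁ - a₁ * b₀), (a₀ - z * a₁) / (a₀ * b₁ - a₁ * b₀),
    by rw [mul_div_assoc', mul_div_assoc', ← add_div, div_eq_iff h]; ring,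
    by rw [mul_div_assoc', mul_div_assoc', ← add_div, div_eq_iff h]; ring,
    by field_simp; ring⟩

open Polynomial in
theorem not_forall_mul_add_pow_eq {K : Type*} [Field K] [CharZero K] {n : ℕ} (hn : 2 ≤ n)
    {c u w p q : K} (hc : c ≠ 0) (hu : u ≠ 0) (hw : w ≠ 0) :
    ¬ ∀ z, c * (u * z + w) ^ n = p * z ^ n + q := by
  intro h
  have hpoly : C c * (X + C w) ^ n = C (p / u ^ n) * X ^ n + C q := funext fun z => by
    have := h (z / u)
    rw [mul_div_cancel₀ _ hu] at this
    simp only [eval_mul, eval_C, eval_pow, eval_add, eval_X]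
    rw [this, div_pow]
    field_simp
  have hcoeff := congrArg (coeff · (n - 1)) hpoly
  simp only [coeff_C_mul, coeff_X_add_C_pow, coeff_add, coeff_X_pow, coeff_C,
    if_neg (show n - 1 ≠ n by omega), if_neg (show n - 1 ≠ 0 by omega),
    Nat.sub_sub_self (show 1 ≤ n by omega), pow_one, Nat.choose_symm (show 1 ≤ n by omega),
    Nat.choose_one_right, mul_zero, add_zero] at hcoeff
  exact mul_ne_zero hc (mul_ne_zero hw (Nat.cast_ne_zero.mpr (by omega))) hcoeff

section Pencil

variable {K : Type*} [Field K]

def IsBasePointFree (A B : K → K → K) : Prop :=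
  ∀ s t, A s t = 0 → B s t = 0 → s = 0 ∧ t = 0

def IsPurePower (n : ℕ) (P : K → K → K) : Prop :=
  ∃ a b c : K, ∀ s t, P s t = c * (a * s + b * t) ^ n

namespace IsBasePointFree

variable {A B : K → K → K} (hAB : IsBasePointFree A B)
include hAB

theorem eq_zero_of_members_eq_zero {y z s t : K} (hyz : y ≠ z)
    (hy : A s t + y * B s t = 0) (hz : A s t + z * B s t = 0) : s = 0 ∧ t = 0 := by
  have hB : B s t = 0 := by
    have h : (y - z) * B s t = 0 := by linear_combination hy - hz
    exact (mul_eq_zero.mp h).resolve_left (sub_ne_zero.mpr hyz)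
  exact hAB s t (by linear_combination hy - y * hB) hB

theorem ne_zero_and_det_ne_zero {n : ℕ} (hn : n ≠ 0) {y z a b c a' b' c' : K} (hyz : y ≠ z)
    (hy : ∀ s t, A s t + y * B s t = c * (a * s + b * t) ^ n)
    (hz : ∀ s t, A s t + z * B s t = c' * (a' * s + b' * t) ^ n) :
    c ≠ 0 ∧ a * b' - a' * b ≠ 0 := by
  constructor
  · rintro rfl
    obtain ⟨s, t, hst, hL', -⟩ := exists_ne_zero_linear_forms_eq_zero (sub_self (a' * b'))
    exact hst (hAB.eq_zero_of_members_eq_zero hyz (by simp [hy])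
      (by simp [hz, hL', zero_pow hn]))
  · intro hdet
    obtain ⟨s, t, hst, hL, hL'⟩ := exists_ne_zero_linear_forms_eq_zero hdet
    exact hst (hAB.eq_zero_of_members_eq_zero hyz (by simp [hy, hL, zero_pow hn])
      (by simp [hz, hL', zero_pow hn]))

variable [CharZero K]

theorem not_isPurePower_three {n : ℕ} (hn : 2 ≤ n) {x₀ x₁ x₂ : K}
    (h₀₁ : x₀ ≠ x₁) (h₀₂ : x₀ ≠ x₂) (h₁₂ : x₁ ≠ x₂)
    (h₀ : IsPurePower n fun s t => A s t + x₀ * B s t)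
    (h₁ : IsPurePower n fun s t => A s t + x₁ * B s t)
    (h₂ : IsPurePower n fun s t => A s t + x₂ * B s t) : False := by
  obtain ⟨a₀, b₀, c₀, h₀⟩ := h₀
  obtain ⟨a₁, b₁, c₁, h₁⟩ := h₁
  obtain ⟨a₂, b₂, c₂, h₂⟩ := h₂
  have hn0 : n ≠ 0 := by omega
  obtain ⟨-, hdet₀₁⟩ := hAB.ne_zero_and_det_ne_zero hn0 h₀₁ h₀ h₁
  obtain ⟨-, hdet₀₂⟩ := hAB.ne_zero_and_det_ne_zero hn0 h₀₂ h₀ h₂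
  obtain ⟨hc₂, hdet₂₁⟩ := hAB.ne_zero_and_det_ne_zero hn0 h₁₂.symm h₂ h₁
  have hx : x₁ - x₀ ≠ 0 := sub_ne_zero.mpr h₀₁.symm
  refine not_forall_mul_add_pow_eq hn hc₂ (div_ne_zero hdet₂₁ hdet₀₁) (div_ne_zero hdet₀₂ hdet₀₁)
    (p := (x₁ - x₂) / (x₁ - x₀) * c₀) (q := (x₂ - x₀) / (x₁ - x₀) * c₁) fun z => ?_
  obtain ⟨s, t, hL₀, hL₁, hL₂⟩ := exists_linear_forms_eq hdet₀₁ a₂ b₂ z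
  have H₀ := h₀ s t
  have H₁ := h₁ s t
  have H₂ := h₂ s t
  rw [hL₀] at H₀
  rw [hL₁, one_pow, mul_one] at H₁
  rw [hL₂] at H₂
  beta_reduce at H₀ H₁ H₂
  -- the member at `x₂` is an affine combination of those at `x₀` and `x₁`
  linear_combination (norm := skip) (x₁ - x₂) / (x₁ - x₀) * H₀ + (x₂ - x₀) / (x₁ - x₀) * H₁ - H₂
  field_simp
  ring

theorem finite_setOf_isPurePower {n : ℕ} (hn : 2 ≤ n) :
    {x | IsPurePower n fun s t => A s t + x * B s t}.Finite := by
  classical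
  by_contra hinf
  obtain ⟨T, hTS, hT⟩ := Set.Infinite.exists_subset_card_eq hinf 3
  obtain ⟨x₀, x₁, x₂, h₀₁, h₀₂, h₁₂, rfl⟩ := Finset.card_eq_three.mp hT
  exact hAB.not_isPurePower_three hn h₀₁ h₀₂ h₁₂ (hTS (by simp)) (hTS (by simp)) (hTS (by simp))

end IsBasePointFree

end Pencil

open MvPolynomial

theorem isBasePointFree_of_smooth {K : Type*} [Field K] [Infinite K] {F : MvPolynomial (Fin 4) K}
    (hsm : ∀ v : Fin 4 → K, v ≠ 0 → eval v F = 0 → ∃ i, eval v (pderiv i F) ≠ 0)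
    {e f : Fin 4 → K} (hef : LinearIndependent K ![e, f])
    (hline : ∀ s t : K, eval (s • e + t • f) F = 0)
    {g₀ g₁ : Fin 4 → K} (hbasis : LinearIndependent K ![e, f, g₀, g₁]) :
    IsBasePointFree (fun s t => ∑ i, g₀ i * eval (s • e + t • f) (pderiv i F))
      (fun s t => ∑ i, g₁ i * eval (s • e + t • f) (pderiv i F)) := by
  intro s t h₀ h₁
  by_contra hst
  obtain ⟨i, hi⟩ := hsm _ (fun h => hst (LinearIndependent.pair_iff.mp hef s t h)) (hline s t)
  refine hi (congrFun (eq_zero_of_forall_dotProduct_eq_zero hbasis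
    (w := fun i => eval (s • e + t • f) (pderiv i F)) fun k => ?_) i)
  fin_cases k
  · refine sum_mul_eval_pderiv_eq_zero_of_eval_add_smul_eq_zero (u := e) fun x => ?_
    rw [show s • e + t • f + x • e = (s + x) • e + t • f by module]
    exact hline _ _
  · refine sum_mul_eval_pderiv_eq_zero_of_eval_add_smul_eq_zero (u := f) fun x => ?_
    rw [show s • e + t • f + x • f = s • e + (t + x) • f by module]
    exact hline _ _
  · exact h₀
  · exact h₁

theorem stmt10_general (d : ℕ) (hd : 5 ≤ d)
    (F : MvPolynomial (Fin 4) ℂ)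
    (hsm : ∀ v : Fin 4 → ℂ, v ≠ 0 → eval v F = 0 → ∃ i, eval v (pderiv i F) ≠ 0)
    (e f : Fin 4 → ℂ) (hef : LinearIndependent ℂ ![e, f])
    (hline : ∀ s t : ℂ, eval (s • e + t • f) F = 0)
    (g₀ g₁ : Fin 4 → ℂ) (hbasis : LinearIndependent ℂ ![e, f, g₀, g₁]) :
    Set.Finite {x : ℂ | ∃ a b c : ℂ, ∀ s t : ℂ,
      (∑ i : Fin 4, (g₀ i + x * g₁ i) * eval (s • e + t • f) (pderiv i F)) =
        c * (a * s + b * t) ^ (d - 1)} := by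
  refine ((isBasePointFree_of_smooth hsm hef hline hbasis).finite_setOf_isPurePower
    (n := d - 1) (by omega)).subset ?_
  rintro x ⟨a, b, c, h⟩
  refine ⟨a, b, c, fun s t => ?_⟩
  rw [← h s t]
  dsimp only
  rw [Finset.mul_sum, ← Finset.sum_add_distrib]
  exact Finset.sum_congr rfl fun i _ => by ring

/-- let `X = V(F) ⊂ ℙ³` be a smooth surface of degree `d ≥ 5` containing the
line `ℓ` spanned by `e, f`.  Each plane `H ⊇ ℓ` cuts `X` in `ℓ` plus a residual curve
`C_H` of degree `d - 1`, and the divisor `D = C_H ∩ ℓ` on `ℓ ≅ ℙ¹` is cut out by the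
binary form `φ_H(s,t) = ∑ᵢ gᵢ ∂ᵢF(s·e + t·f)` of degree `d - 1`, where `g` spans `H`
together with `e, f`.  Then for a general plane `H` of the pencil (parameterized in the
affine chart `g = g₀ + x·g₁`) the divisor `D` is NOT supported at a single point: the set
of parameters `x` for which `φ_H` is proportional to a `(d-1)`-st power of a linear form is
finite.  Equivalently, the congruence of tangent lines of `X` along `ℓ` has not order one. -/
theorem stmt10 (d : ℕ) (hd : 5 ≤ d)
    (F : MvPolynomial (Fin 4) ℂ) (hF : F.IsHomogeneous d)
    (hsm : ∀ v : Fin 4 → ℂ, v ≠ 0 → eval v F = 0 → ∃ i, eval v (pderiv i F) ≠ 0)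
    (e f : Fin 4 → ℂ) (hef : LinearIndependent ℂ ![e, f])
    (hline : ∀ s t : ℂ, eval (s • e + t • f) F = 0)
    (g₀ g₁ : Fin 4 → ℂ) (hbasis : LinearIndependent ℂ ![e, f, g₀, g₁]) :
    Set.Finite {x : ℂ | ∃ a b c : ℂ, ∀ s t : ℂ,
      (∑ i : Fin 4, (g₀ i + x * g₁ i) * eval (s • e + t • f) (pderiv i F)) =
        c * (a * s + b * t) ^ (d - 1)} :=
  stmt10_general d hd F hsm e f hef hline g₀ g₁ hbasis
end

section
/- For any d ≥ 2 and k ≥ 1, the hypersurface X ⊂ ℙ^{2k+1} defined by x₀^d − x₀x₁^{d−1} + x₂^d − x₂x₃^{d−1} + ⋯ + x_{2k}^d − x_{2k}x_{2k+1}^{d−1} = 0 is smooth and contains the two disjoint k-planes {x₀ = x₂ = ⋯ = x_{2k} = 0} and {x₀ − x₁ = x₂ − x₃ = ⋯ = x_{2k} − x_{2k+1} = 0}. -/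
open MvPolynomial

/-- for `d ≥ 2`, `k ≥ 1`, the hypersurface of `ℙ^{2k+1}` defined by
`x₀^d - x₀x₁^{d-1} + x₂^d - x₂x₃^{d-1} + ⋯ + x_{2k}^d - x_{2k}x_{2k+1}^{d-1} = 0`
is smooth (its partial derivatives have no common zero besides `0`) and contains the two
disjoint `k`-planes `{x₀ = x₂ = ⋯ = x_{2k} = 0}` and
`{x₀ - x₁ = x₂ - x₃ = ⋯ = x_{2k} - x_{2k+1} = 0}`. -/
theorem stmt12 (d k : ℕ) (hd : 2 ≤ d) (hk : 1 ≤ k)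
    (ev od : Fin (k + 1) → Fin (2 * k + 2))
    (hev : ∀ i, (ev i : ℕ) = 2 * i) (hod : ∀ i, (od i : ℕ) = 2 * i + 1)
    (F : MvPolynomial (Fin (2 * k + 2)) ℂ)
    (hFdef : F = ∑ i : Fin (k + 1),
      (X (ev i) ^ d - X (ev i) * X (od i) ^ (d - 1)))
    (Λ₁ Λ₂ : Submodule ℂ (Fin (2 * k + 2) → ℂ))
    (hΛ₁ : Λ₁ = ⨅ i : Fin (k + 1),
      LinearMap.ker (LinearMap.proj (R := ℂ) (φ := fun _ : Fin (2 * k + 2) => ℂ) (ev i)))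
    (hΛ₂ : Λ₂ = ⨅ i : Fin (k + 1),
      LinearMap.ker ((LinearMap.proj (R := ℂ) (φ := fun _ : Fin (2 * k + 2) => ℂ) (ev i)) -
        (LinearMap.proj (od i)))) :
    -- smoothness:
    (∀ v : Fin (2 * k + 2) → ℂ, v ≠ 0 → ∃ i, eval v (pderiv i F) ≠ 0) ∧
    -- the two linear subspaces are `k`-planes of `ℙ^{2k+1}`:
    Module.finrank ℂ Λ₁ = k + 1 ∧ Module.finrank ℂ Λ₂ = k + 1 ∧
    -- they are disjoint:
    Λ₁ ⊓ Λ₂ = ⊥ ∧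
    -- and both are contained in the hypersurface:
    (∀ v ∈ Λ₁, eval v F = 0) ∧ (∀ v ∈ Λ₂, eval v F = 0) := by
  have hd0 : d ≠ 0 := by omega
  have hd1 : d - 1 ≠ 0 := by omega
  -- basic combinatorics of the index maps
  have evinj : Function.Injective ev := by
    intro i i' h
    have h2 := congrArg Fin.val h
    rw [hev, hev] at h2
    exact Fin.ext (by omega)
  have hne : ∀ i i', ev i ≠ od i' := by
    intro i i' h
    have h2 := congrArg Fin.val h
    rw [hev, hod] at h2
    omega
  have cover : ∀ j : Fin (2 * k + 2), (∃ i, j = ev i) ∨ (∃ i, j = od i) := by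
    intro j
    have hj := j.isLt
    rcases Nat.even_or_odd (j : ℕ) with he | ho
    · obtain ⟨m, hm⟩ := he
      refine Or.inl ⟨⟨m, by omega⟩, Fin.ext ?_⟩
      rw [hev]
      simp only [Fin.val_mk]
      omega
    · obtain ⟨m, hm⟩ := ho
      refine Or.inr ⟨⟨m, by omega⟩, Fin.ext ?_⟩
      rw [hod]
      simp only [Fin.val_mk]
      omega
  -- membership characterizations
  have mem1 : ∀ v, v ∈ Λ₁ ↔ ∀ i, v (ev i) = 0 := by
    intro v
    simp [hΛ₁, Submodule.mem_iInf, LinearMap.mem_ker]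
  have mem2 : ∀ v, v ∈ Λ₂ ↔ ∀ i, v (ev i) = v (od i) := by
    intro v
    simp [hΛ₂, Submodule.mem_iInf, LinearMap.mem_ker, sub_eq_zero]
  -- evaluation of F
  have evalF : ∀ v : Fin (2 * k + 2) → ℂ,
      eval v F = ∑ i : Fin (k + 1), (v (ev i) ^ d - v (ev i) * v (od i) ^ (d - 1)) := by
    intro v
    simp [hFdef]
  -- partial derivatives of the individual terms
  have pd_zero : ∀ (j : Fin (2 * k + 2)) (i : Fin (k + 1)), j ≠ ev i → j ≠ od i →
      pderiv j (X (ev i) ^ d - X (ev i) * X (od i) ^ (d - 1)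
        : MvPolynomial (Fin (2 * k + 2)) ℂ) = 0 := by
    intro j i h1 h2
    simp [pderiv_pow, pderiv_mul, pderiv_X_of_ne h1.symm, pderiv_X_of_ne h2.symm]
  have pd_ev : ∀ (i : Fin (k + 1)) (v : Fin (2 * k + 2) → ℂ),
      eval v (pderiv (ev i) (X (ev i) ^ d - X (ev i) * X (od i) ^ (d - 1)
        : MvPolynomial (Fin (2 * k + 2)) ℂ)) =
      (d : ℂ) * v (ev i) ^ (d - 1) - v (od i) ^ (d - 1) := by
    intro i v
    have h : od i ≠ ev i := (hne i i).symm
    simp [pderiv_pow, pderiv_mul, pderiv_X_of_ne h]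
  have pd_od : ∀ (i : Fin (k + 1)) (v : Fin (2 * k + 2) → ℂ),
      eval v (pderiv (od i) (X (ev i) ^ d - X (ev i) * X (od i) ^ (d - 1)
        : MvPolynomial (Fin (2 * k + 2)) ℂ)) =
      -(v (ev i) * (((d - 1 : ℕ) : ℂ) * v (od i) ^ (d - 2))) := by
    intro i v
    have h : ev i ≠ od i := hne i i
    simp [pderiv_pow, pderiv_mul, pderiv_X_of_ne h]
    ring_nf
    simp [Nat.sub_sub]
  -- partial derivatives of F
  have pdF_ev : ∀ (v : Fin (2 * k + 2) → ℂ) (i₀ : Fin (k + 1)),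
      eval v (pderiv (ev i₀) F) = (d : ℂ) * v (ev i₀) ^ (d - 1) - v (od i₀) ^ (d - 1) := by
    intro v i₀
    rw [hFdef, map_sum, map_sum, Finset.sum_eq_single i₀]
    · exact pd_ev i₀ v
    · intro i _ hi
      rw [pd_zero (ev i₀) i (fun h => hi (evinj h).symm) (hne i₀ i)]
      simp
    · simp
  have pdF_od : ∀ (v : Fin (2 * k + 2) → ℂ) (i₀ : Fin (k + 1)),
      eval v (pderiv (od i₀) F) =
        -(v (ev i₀) * (((d - 1 : ℕ) : ℂ) * v (od i₀) ^ (d - 2))) := by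
    intro v i₀
    rw [hFdef, map_sum, map_sum, Finset.sum_eq_single i₀]
    · exact pd_od i₀ v
    · intro i _ hi
      have hodinj : od i₀ ≠ od i := by
        intro h
        have h2 := congrArg Fin.val h
        rw [hod, hod] at h2
        exact hi (Fin.ext (by omega)).symm
      rw [pd_zero (od i₀) i (fun h => hne i i₀ h.symm) hodinj]
      simp
    · simp
  -- section for surjectivity
  have sect : ∀ w : Fin (k + 1) → ℂ, ∃ v : Fin (2 * k + 2) → ℂ,
      (∀ i, v (ev i) = w i) ∧ (∀ i, v (od i) = 0) := by
    intro w
    refine ⟨fun j => ∑ i, if j = ev i then w i else 0, ?_, ?_⟩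
    · intro i₀
      show (∑ i : Fin (k + 1), if ev i₀ = ev i then w i else 0) = w i₀
      rw [Finset.sum_eq_single i₀]
      · simp
      · intro i _ hi
        rw [if_neg fun h => hi (evinj h.symm)]
      · simp
    · intro i₀
      show (∑ i : Fin (k + 1), if od i₀ = ev i then w i else 0) = 0
      exact Finset.sum_eq_zero fun i _ => if_neg fun h => hne i i₀ h.symm
  have rank_ker : ∀ L : (Fin (2 * k + 2) → ℂ) →ₗ[ℂ] (Fin (k + 1) → ℂ),
      Function.Surjective L → Module.finrank ℂ (LinearMap.ker L) = k + 1 := by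
    intro L hL
    have h1 := LinearMap.finrank_range_add_finrank_ker L
    rw [LinearMap.range_eq_top.mpr hL, finrank_top] at h1
    have h2 : Module.finrank ℂ (Fin (2 * k + 2) → ℂ) = 2 * k + 2 := by
      simp [Module.finrank_pi]
    have h3 : Module.finrank ℂ (Fin (k + 1) → ℂ) = k + 1 := by
      simp [Module.finrank_pi]
    omega
  refine ⟨?_, ?_, ?_, ?_, ?_, ?_⟩
  · -- smoothness
    intro v hv
    by_contra h
    push_neg at h
    have hdc : (d : ℂ) ≠ 0 := Nat.cast_ne_zero.mpr hd0
    have hdc1 : ((d - 1 : ℕ) : ℂ) ≠ 0 := Nat.cast_ne_zero.mpr hd1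
    have key : ∀ i : Fin (k + 1), v (ev i) = 0 ∧ v (od i) = 0 := by
      intro i
      have hE := h (ev i)
      rw [pdF_ev] at hE
      have hO := h (od i)
      rw [pdF_od] at hO
      rw [neg_eq_zero] at hO
      rcases mul_eq_zero.mp hO with ha | hb
      · refine ⟨ha, ?_⟩
        rw [ha, zero_pow hd1, mul_zero, zero_sub, neg_eq_zero] at hE
        exact pow_eq_zero_iff hd1 |>.mp hE
      · rcases mul_eq_zero.mp hb with hc | hb2
        · exact absurd hc hdc1
        · have hbz : v (od i) = 0 := (pow_eq_zero_iff'.mp hb2).1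
          refine ⟨?_, hbz⟩
          rw [hbz, zero_pow hd1, sub_zero, mul_eq_zero] at hE
          rcases hE with hE | hE
          · exact absurd hE hdc
          · exact pow_eq_zero_iff hd1 |>.mp hE
    apply hv
    funext j
    show v j = 0
    rcases cover j with ⟨i, rfl⟩ | ⟨i, rfl⟩
    · exact (key i).1
    · exact (key i).2
  · -- finrank Λ₁
    have hker : Λ₁ = LinearMap.ker (LinearMap.funLeft ℂ ℂ ev) := by
      ext v
      rw [mem1]
      simp [LinearMap.mem_ker, LinearMap.funLeft_apply, _root_.funext_iff, Function.comp]
    rw [hker]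
    apply rank_ker
    intro w
    obtain ⟨v, h1, _⟩ := sect w
    exact ⟨v, funext h1⟩
  · -- finrank Λ₂
    have hker : Λ₂ = LinearMap.ker
        (LinearMap.funLeft ℂ ℂ ev - LinearMap.funLeft ℂ ℂ od) := by
      ext v
      rw [mem2]
      simp [LinearMap.mem_ker, LinearMap.funLeft_apply, _root_.funext_iff, Function.comp,
        sub_eq_zero]
    rw [hker]
    apply rank_ker
    intro w
    obtain ⟨v, h1, h2⟩ := sect w
    refine ⟨v, funext fun i => ?_⟩
    simp [LinearMap.funLeft_apply, h1 i, h2 i]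
  · -- disjointness
    rw [eq_bot_iff]
    rintro v ⟨hm1, hm2⟩
    have h1 := (mem1 v).mp hm1
    have h2 := (mem2 v).mp hm2
    have hz : v = 0 := by
      funext j
      show v j = 0
      rcases cover j with ⟨i, rfl⟩ | ⟨i, rfl⟩
      · exact h1 i
      · rw [← h2 i]
        exact h1 i
    exact hz ▸ Submodule.zero_mem ⊥
  · -- Λ₁ in the hypersurface
    intro v hv
    rw [evalF]
    refine Finset.sum_eq_zero fun i _ => ?_
    rw [(mem1 v).mp hv i, zero_pow hd0, zero_mul, sub_zero]
  · -- Λ₂ in the hypersurface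
    intro v hv
    rw [evalF]
    refine Finset.sum_eq_zero fun i _ => ?_
    rw [← (mem2 v).mp hv i]
    have : v (ev i) * v (ev i) ^ (d - 1) = v (ev i) ^ d := by
      rw [← pow_succ']
      congr 1
      omega
    rw [this, sub_self]
end

section
/- Let C ⊂ ℙ³ be a twisted cubic (rational normal curve of degree 3). Then through a general point P ∈ ℙ³ there passes exactly one bisecant line of C (a line meeting C in two points, counted with multiplicity); i.e., the bisecant lines of the twisted cubic form a first order congruence of lines in ℙ³. -/
open MvPolynomial

/-- The parameterization of the twisted cubic: `[s:t] ↦ [s³ : s²t : st² : t³]`. -/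
noncomputable def tc (p : Fin 2 → ℂ) : Fin 4 → ℂ :=
  ![p 0 ^ 3, p 0 ^ 2 * p 1, p 0 * p 1 ^ 2, p 1 ^ 3]

/-- The differential of `tc` at `u` applied to `h` (used to describe tangent lines). -/
noncomputable def tcD (u h : Fin 2 → ℂ) : Fin 4 → ℂ :=
  ![3 * u 0 ^ 2 * h 0,
    2 * u 0 * u 1 * h 0 + u 0 ^ 2 * h 1,
    u 1 ^ 2 * h 0 + 2 * u 0 * u 1 * h 1,
    3 * u 1 ^ 2 * h 1]

/-- A line `W` (2-dimensional subspace of `ℂ⁴`) is a bisecant of the twisted cubic: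
it meets the curve in two points counted with multiplicity, i.e. it passes through two
distinct points of the curve, or it is a tangent line. -/
def IsBisecant (W : Submodule ℂ (Fin 4 → ℂ)) : Prop :=
  (∃ u w : Fin 2 → ℂ, LinearIndependent ℂ ![u, w] ∧ tc u ∈ W ∧ tc w ∈ W) ∨
  (∃ u : Fin 2 → ℂ, u ≠ 0 ∧ ∀ h : Fin 2 → ℂ, tcD u h ∈ W)

/-!
For `v ∈ ℂ⁴` the `2 × 2` minors of `[[v₀, v₁, v₂], [v₁, v₂, v₃]]` are the coefficients of a
binary quadratic form `Q_v`. If `v = A • tc u + B • tc w`, then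
`Q_v = A B det(u, w)² det(u, ·) det(w, ·)`, so the parameters of a secant through `v` are roots
of `Q_v`; on a tangent line `Q_v` is a square, so its discriminant vanishes. Conversely, if `Q_v`
has two distinct roots `[1 : r]`, `[1 : s]`, the coordinates of `v` satisfy the linear recurrence
with characteristic roots `r, s`, i.e. `v ∈ span (tc [1 : r], tc [1 : s])`. So exactly one
bisecant passes through `v` unless `disc Q_v = 0` or `Q_v` has a root at `[0 : 1]`
(`v₀v₂ - v₁² = 0`).
-/

section LinearAlgebra

variable {K V : Type*} [Field K] [AddCommGroup V] [Module K V]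

theorem finrank_span_pair_eq_two {x y : V} (hxy : LinearIndependent K ![x, y]) :
    Module.finrank K (Submodule.span K {x, y}) = 2 := by
  have h := finrank_span_eq_card hxy
  rwa [Matrix.range_cons_cons_empty, Fintype.card_fin] at h

theorem span_pair_eq_of_finrank_eq_two {W : Submodule K V} [FiniteDimensional K W]
    (hW : Module.finrank K W = 2) {x y : V} (hxy : LinearIndependent K ![x, y])
    (hx : x ∈ W) (hy : y ∈ W) : Submodule.span K {x, y} = W :=
  Submodule.eq_of_le_of_finrank_eq (Submodule.span_le.mpr (Set.insert_subset hx (by simpa)))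
    (by rw [finrank_span_pair_eq_two hxy, hW])

def wedge (u w : Fin 2 → K) : K := u 0 * w 1 - u 1 * w 0

theorem wedge_self (u : Fin 2 → K) : wedge u u = 0 := by
  unfold wedge; ring

theorem linearIndependent_pair_iff_wedge_ne_zero {u w : Fin 2 → K} :
    LinearIndependent K ![u, w] ↔ wedge u w ≠ 0 := by
  refine (Matrix.linearIndependent_rows_iff_isUnit (A := Matrix.of ![u, w])).trans ?_
  rw [Matrix.isUnit_iff_isUnit_det, isUnit_iff_ne_zero, Matrix.det_fin_two]
  rfl

theorem exists_roots_sum_prod_of_discrim_ne_zero [IsAlgClosed K] [NeZero (2 : K)] {a b c : K}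
    (ha : a ≠ 0) (hd : discrim a b c ≠ 0) :
    ∃ r s : K, r ≠ s ∧ a * (r + s) = -b ∧ a * (r * s) = c := by
  obtain ⟨d, hd2⟩ : ∃ d : K, d ^ 2 = discrim a b c := IsAlgClosed.exists_pow_nat_eq _ two_pos
  have hd0 : d ≠ 0 := by rintro rfl; exact hd (by simpa using hd2.symm)
  have h2a : 2 * a ≠ 0 := mul_ne_zero two_ne_zero ha
  refine ⟨(-b + d) / (2 * a), (-b - d) / (2 * a), ?_, ?_, ?_⟩
  · rw [Ne, div_left_inj' h2a]
    intro h
    exact hd0 (mul_left_cancel₀ two_ne_zero (by linear_combination h))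
  · field_simp
    ring
  · rw [discrim] at hd2
    field_simp
    linear_combination -hd2

end LinearAlgebra

namespace TwistedCubic

theorem wedge_one_one_ne_zero {r s : ℂ} (hrs : r ≠ s) : wedge ![1, r] ![1, s] ≠ 0 := by
  simpa [wedge, sub_eq_zero] using hrs.symm

theorem tc_smul (c : ℂ) (p : Fin 2 → ℂ) : tc (c • p) = c ^ 3 • tc p := by
  funext i; fin_cases i <;> simp [tc] <;> ring

/-- Pairing with the binary cubic `det(w, ·)³` kills `tc w` and not `tc u`. -/
theorem linearIndependent_tc {u w : Fin 2 → ℂ} (h : wedge u w ≠ 0) :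
    LinearIndependent ℂ ![tc u, tc w] := by
  rw [LinearIndependent.pair_iff]
  intro a b hab
  have h0 := congrFun hab 0
  have h1 := congrFun hab 1
  have h2 := congrFun hab 2
  have h3 := congrFun hab 3
  simp only [tc, Pi.add_apply, Pi.smul_apply, smul_eq_mul, Pi.zero_apply,
    Matrix.cons_val] at h0 h1 h2 h3
  have ha : a * wedge u w ^ 3 = 0 := by
    unfold wedge
    linear_combination w 1 ^ 3 * h0 - 3 * w 0 * w 1 ^ 2 * h1 + 3 * w 0 ^ 2 * w 1 * h2
      - w 0 ^ 3 * h3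
  have hb : b * wedge u w ^ 3 = 0 := by
    unfold wedge
    linear_combination -(u 1 ^ 3 * h0 - 3 * u 0 * u 1 ^ 2 * h1 + 3 * u 0 ^ 2 * u 1 * h2
      - u 0 ^ 3 * h3)
  exact ⟨(mul_eq_zero.mp ha).resolve_right (pow_ne_zero 3 h),
    (mul_eq_zero.mp hb).resolve_right (pow_ne_zero 3 h)⟩

def secantCoeff₀ (v : Fin 4 → ℂ) : ℂ := v 1 * v 3 - v 2 ^ 2

def secantCoeff₁ (v : Fin 4 → ℂ) : ℂ := v 1 * v 2 - v 0 * v 3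

def secantCoeff₂ (v : Fin 4 → ℂ) : ℂ := v 0 * v 2 - v 1 ^ 2

def secantForm (v : Fin 4 → ℂ) (p : Fin 2 → ℂ) : ℂ :=
  secantCoeff₀ v * p 0 ^ 2 + secantCoeff₁ v * p 0 * p 1 + secantCoeff₂ v * p 1 ^ 2

theorem secantForm_smul_tc_add_smul_tc (A B : ℂ) (u w p : Fin 2 → ℂ) :
    secantForm (A • tc u + B • tc w) p = A * B * wedge u w ^ 2 * wedge u p * wedge w p := by
  simp only [secantForm, secantCoeff₀, secantCoeff₁, secantCoeff₂, tc, wedge, Pi.add_apply,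
    Pi.smul_apply, smul_eq_mul, Matrix.cons_val]
  ring

theorem discrim_secantCoeff_tcD (u h : Fin 2 → ℂ) :
    discrim (secantCoeff₂ (tcD u h)) (secantCoeff₁ (tcD u h)) (secantCoeff₀ (tcD u h)) = 0 := by
  simp only [discrim, secantCoeff₀, secantCoeff₁, secantCoeff₂, tcD, Matrix.cons_val]
  ring

noncomputable def tcDₗ (u : Fin 2 → ℂ) : (Fin 2 → ℂ) →ₗ[ℂ] (Fin 4 → ℂ) where
  toFun := tcD u
  map_add' h h' := by funext i; fin_cases i <;> simp [tcD] <;> ring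
  map_smul' c h := by funext i; fin_cases i <;> simp [tcD] <;> ring

theorem tcDₗ_injective {u : Fin 2 → ℂ} (hu : u ≠ 0) : Function.Injective (tcDₗ u) := by
  rw [← LinearMap.ker_eq_bot, LinearMap.ker_eq_bot']
  intro h hh
  have e0 := congrFun hh 0
  have e1 := congrFun hh 1
  have e2 := congrFun hh 2
  have e3 := congrFun hh 3
  simp only [tcDₗ, LinearMap.coe_mk, AddHom.coe_mk, tcD, Matrix.cons_val, Pi.zero_apply]
    at e0 e1 e2 e3
  have key : h 0 = 0 ∧ h 1 = 0 := by
    have hu' : u 0 ≠ 0 ∨ u 1 ≠ 0 := by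
      simpa [funext_iff, Fin.forall_fin_two, or_iff_not_imp_left] using hu
    rcases hu' with hi | hi
    · have hh0 : h 0 = 0 := by simpa [hi] using e0
      exact ⟨hh0, by simpa [hh0, hi] using e1⟩
    · have hh1 : h 1 = 0 := by simpa [hi] using e3
      exact ⟨by simpa [hh1, hi] using e2, hh1⟩
  funext i
  fin_cases i
  exacts [key.1, key.2]

theorem secantForm_eq_mul {v : Fin 4 → ℂ} {r s : ℂ}
    (hsum : secantCoeff₂ v * (r + s) = -secantCoeff₁ v)
    (hprod : secantCoeff₂ v * (r * s) = secantCoeff₀ v) (p : Fin 2 → ℂ) :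
    secantForm v p = secantCoeff₂ v * (p 1 - r * p 0) * (p 1 - s * p 0) := by
  unfold secantForm
  linear_combination p 0 * p 1 * hsum - p 0 ^ 2 * hprod

theorem tc_mem_span_of_secantForm_eq_zero {v : Fin 4 → ℂ} {r s : ℂ}
    (hq : secantCoeff₂ v ≠ 0) (hsum : secantCoeff₂ v * (r + s) = -secantCoeff₁ v)
    (hprod : secantCoeff₂ v * (r * s) = secantCoeff₀ v) {u : Fin 2 → ℂ}
    (hu : secantForm v u = 0) : tc u ∈ Submodule.span ℂ {tc ![1, r], tc ![1, s]} := by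
  have hu' : u = u 0 • ![1, r] ∨ u = u 0 • ![1, s] := by
    rw [secantForm_eq_mul hsum hprod, mul_assoc, mul_eq_zero, mul_eq_zero, sub_eq_zero,
      sub_eq_zero] at hu
    rcases hu with h | h | h
    · exact absurd h hq
    · left; funext i; fin_cases i <;> simp [h, mul_comm]
    · right; funext i; fin_cases i <;> simp [h, mul_comm]
  rcases hu' with h | h <;> rw [h, tc_smul] <;> apply Submodule.smul_mem <;>
    apply Submodule.subset_span <;> simp

theorem mem_span_tc_of_vieta {v : Fin 4 → ℂ} {r s : ℂ} (hrs : r ≠ s)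
    (hq : secantCoeff₂ v ≠ 0) (hsum : secantCoeff₂ v * (r + s) = -secantCoeff₁ v)
    (hprod : secantCoeff₂ v * (r * s) = secantCoeff₀ v) :
    v ∈ Submodule.span ℂ {tc ![1, r], tc ![1, s]} := by
  have rec2 : v 2 = (r + s) * v 1 - r * s * v 0 := mul_left_cancel₀ hq <| by
    unfold secantCoeff₀ secantCoeff₁ secantCoeff₂ at *
    linear_combination -v 1 * hsum + v 0 * hprod
  have rec3 : v 3 = (r + s) * v 2 - r * s * v 1 := mul_left_cancel₀ hq <| by
    unfold secantCoeff₀ secantCoeff₁ secantCoeff₂ at *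
    linear_combination -v 2 * hsum + v 1 * hprod
  have hrs' : r - s ≠ 0 := sub_ne_zero.mpr hrs
  obtain ⟨α, β, e0, e1⟩ : ∃ α β : ℂ, α + β = v 0 ∧ α * r + β * s = v 1 :=
    ⟨(v 1 - s * v 0) / (r - s), (r * v 0 - v 1) / (r - s), by field_simp; ring,
      by field_simp; ring⟩
  have e2 : α * r ^ 2 + β * s ^ 2 = v 2 := by linear_combination (r + s) * e1 - r * s * e0 - rec2
  have e3 : α * r ^ 3 + β * s ^ 3 = v 3 := by linear_combination (r + s) * e2 - r * s * e1 - rec3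
  refine Submodule.mem_span_pair.mpr ⟨α, β, funext fun i => ?_⟩
  fin_cases i <;> [simpa [tc] using e0; simpa [tc] using e1; simpa [tc] using e2;
    simpa [tc] using e3]

theorem discrim_secantCoeff_eq_zero_of_tangent {W : Submodule ℂ (Fin 4 → ℂ)}
    (hW : Module.finrank ℂ W = 2) {v : Fin 4 → ℂ} (hv : v ∈ W) {u : Fin 2 → ℂ} (hu : u ≠ 0)
    (hT : ∀ h, tcD u h ∈ W) :
    discrim (secantCoeff₂ v) (secantCoeff₁ v) (secantCoeff₀ v) = 0 := by
  have hrange : LinearMap.range (tcDₗ u) = W :=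
    Submodule.eq_of_le_of_finrank_eq (by rintro _ ⟨h, rfl⟩; exact hT h)
      (by rw [LinearMap.finrank_range_of_inj (tcDₗ_injective hu), hW, Module.finrank_fin_fun])
  obtain ⟨h, rfl⟩ := LinearMap.mem_range.mp (hrange ▸ hv)
  exact discrim_secantCoeff_tcD u h

theorem isBisecant_span_tc {r s : ℂ} (hrs : r ≠ s) :
    IsBisecant (Submodule.span ℂ {tc ![1, r], tc ![1, s]}) :=
  Or.inl ⟨![1, r], ![1, s],
    linearIndependent_pair_iff_wedge_ne_zero.mpr (wedge_one_one_ne_zero hrs),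
    Submodule.subset_span (by simp), Submodule.subset_span (by simp)⟩

theorem finrank_span_tc {r s : ℂ} (hrs : r ≠ s) :
    Module.finrank ℂ (Submodule.span ℂ {tc ![1, r], tc ![1, s]}) = 2 :=
  finrank_span_pair_eq_two (linearIndependent_tc (wedge_one_one_ne_zero hrs))

theorem eq_span_tc_of_isBisecant {v : Fin 4 → ℂ} {r s : ℂ} (hrs : r ≠ s)
    (hq : secantCoeff₂ v ≠ 0) (hsum : secantCoeff₂ v * (r + s) = -secantCoeff₁ v)
    (hprod : secantCoeff₂ v * (r * s) = secantCoeff₀ v)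
    (hd : discrim (secantCoeff₂ v) (secantCoeff₁ v) (secantCoeff₀ v) ≠ 0)
    {W : Submodule ℂ (Fin 4 → ℂ)} (hW : Module.finrank ℂ W = 2) (hv : v ∈ W)
    (hbis : IsBisecant W) : W = Submodule.span ℂ {tc ![1, r], tc ![1, s]} := by
  rcases hbis with ⟨u, w, huw, hu, hw⟩ | ⟨u, hu, hT⟩
  · have hspan := span_pair_eq_of_finrank_eq_two hW
      (linearIndependent_tc (linearIndependent_pair_iff_wedge_ne_zero.mp huw)) hu hw
    obtain ⟨A, B, hAB⟩ := Submodule.mem_span_pair.mp (hspan ▸ hv)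
    have hFu : secantForm v u = 0 := by
      simp [← hAB, secantForm_smul_tc_add_smul_tc, wedge_self]
    have hFw : secantForm v w = 0 := by
      simp [← hAB, secantForm_smul_tc_add_smul_tc, wedge_self]
    refine Submodule.eq_of_le_of_finrank_eq ?_ (by rw [hW, finrank_span_tc hrs])
    rw [← hspan, Submodule.span_le]
    exact Set.insert_subset (tc_mem_span_of_secantForm_eq_zero hq hsum hprod hFu)
      (Set.singleton_subset_iff.mpr (tc_mem_span_of_secantForm_eq_zero hq hsum hprod hFw))
  · exact absurd (discrim_secantCoeff_eq_zero_of_tangent hW hv hu hT) hd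

noncomputable def secantPoly : MvPolynomial (Fin 4) ℂ :=
  (X 0 * X 2 - X 1 ^ 2) *
    ((X 1 * X 2 - X 0 * X 3) ^ 2 - 4 * (X 0 * X 2 - X 1 ^ 2) * (X 1 * X 3 - X 2 ^ 2))

theorem eval_secantPoly (v : Fin 4 → ℂ) :
    eval v secantPoly =
      secantCoeff₂ v * discrim (secantCoeff₂ v) (secantCoeff₁ v) (secantCoeff₀ v) := by
  simp [secantPoly, secantCoeff₀, secantCoeff₁, secantCoeff₂, discrim]

theorem secantPoly_ne_zero : secantPoly ≠ 0 := fun h => by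
  simpa [eval_secantPoly, secantCoeff₀, secantCoeff₁, secantCoeff₂, discrim] using
    congrArg (eval ![1, 0, 1, 0]) h

end TwistedCubic

open TwistedCubic

/-- through a general point `[v]` of `ℙ³` — every point outside the zero
locus of some nonzero polynomial `G` — there passes exactly one bisecant line of the
twisted cubic: the bisecants form a first order congruence of lines of `ℙ³`. -/
theorem stmt15 :
    ∃ G : MvPolynomial (Fin 4) ℂ, G ≠ 0 ∧
      ∀ v : Fin 4 → ℂ, v ≠ 0 → eval v G ≠ 0 →
        ∃! W : Submodule ℂ (Fin 4 → ℂ),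
          Module.finrank ℂ W = 2 ∧ v ∈ W ∧ IsBisecant W := by
  refine ⟨secantPoly, secantPoly_ne_zero, fun v _ hG => ?_⟩
  obtain ⟨hq, hd⟩ := mul_ne_zero_iff.mp ((eval_secantPoly v).symm ▸ hG)
  obtain ⟨r, s, hrs, hsum, hprod⟩ := exists_roots_sum_prod_of_discrim_ne_zero hq hd
  exact ⟨_, ⟨finrank_span_tc hrs, mem_span_tc_of_vieta hrs hq hsum hprod,
    isBisecant_span_tc hrs⟩,
    fun W ⟨hW, hv, hbis⟩ => eq_span_tc_of_isBisecant hrs hq hsum hprod hd hW hv hbis⟩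
end
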